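/- arXiv:1812.03743 — 11 statements merged into one kernel-verified Lean document; each statement's English description precedes it below -/
import Mathlib

section
/- Let S be a finite regular semigroup. Then S has a permutation matching if and only if S has a permutation matching f that preserves Green's H-relation, i.e. such that a H b implies f(a) H f(b) for all a, b ∈ S. -/
variable {S : Type*}

/-- `b` is an inverse of `a`: `a*b*a = a` and `b*a*b = b`. -/
def IsInverseOf [Semigroup S] (b a : S) : Prop := a * b * a = a ∧ b * a * b = b

/-- `invs a` is the set `V(a)` of inverses of `a`. -/
def invs [Semigroup S] (a : S) : Set S := {b | IsInverseOf b a}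

/-- `invsSet A` is `V(A) = ⋃ a ∈ A, V(a)`. -/
def invsSet [Semigroup S] (A : Set S) : Set S := ⋃ a ∈ A, invs a

/-- A semigroup is regular if every element has an inverse. -/
def IsRegularSemigroup (S : Type*) [Semigroup S] : Prop := ∀ a : S, ∃ b, IsInverseOf b a

/-- A permutation matching: a bijection sending each element to one of its inverses. -/
def IsPermMatching [Semigroup S] (f : S → S) : Prop :=
  Function.Bijective f ∧ ∀ a, f a ∈ invs a

def lSet [Semigroup S] (a : S) : Set S := insert a {x | ∃ s, s * a = x}
def rSet [Semigroup S] (a : S) : Set S := insert a {x | ∃ s, a * s = x}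
/-- Green's L relation. -/
def greenL [Semigroup S] (a b : S) : Prop := lSet a = lSet b
/-- Green's R relation. -/
def greenR [Semigroup S] (a b : S) : Prop := rSet a = rSet b
/-- Green's H relation. -/
def greenH [Semigroup S] (a b : S) : Prop := greenL a b ∧ greenR a b
/-- Green's D relation. -/
def greenD [Semigroup S] (a b : S) : Prop := ∃ c, greenL a c ∧ greenR c b
def dClass [Semigroup S] (a : S) : Set S := {b | greenD a b}
def lClass [Semigroup S] (a : S) : Set S := {b | greenL a b}
def rClass [Semigroup S] (a : S) : Set S := {b | greenR a b}

/-- `spow x n = x^(n+1)` (positive powers in a semigroup). -/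
def spow [Semigroup S] (x : S) : ℕ → S
  | 0 => x
  | n + 1 => spow x n * x

/-- `e` is an idempotent positive power of `x`; in a finite semigroup this
characterises `e = x^ω`. -/
def IsOmega [Semigroup S] (x e : S) : Prop := (∃ k : ℕ, e = spow x k) ∧ e * e = e

/-- `y = x^(ω-1)`: `y = x^m` for the least positive `m` with `x^(m+1)` idempotent
(in a finite semigroup `x^(m+1)` idempotent iff `x^(m+1) = x^ω`). Here `m = k+1`. -/
def IsOmegaMinusOne [Semigroup S] (x y : S) : Prop :=
  ∃ k : ℕ, y = spow x k ∧ spow x (k+1) * spow x (k+1) = spow x (k+1) ∧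
    ∀ j < k, ¬ (spow x (j+1) * spow x (j+1) = spow x (j+1))

/-!
Inverses pass rigidly between H-classes: if one element of `H_a` has an inverse in `H_b`, then
every element of `H_a` has exactly one inverse in `H_b`, so `H_a` and `H_b` have the same size.
Give each element the weight `1 / |H-class|`. A permutation matching `f` maps the elements of a
family `A` of H-classes injectively into the classes containing inverses of them, preserving
weights, so at least `|A|` such classes exist. By Hall's theorem there is an injection `φ` of
H-classes with each `H_a` having inverses in `φ(H_a)`, and sending `a` to its unique inverse in
`φ(H_a)` is an H-preserving permutation matching.
-/

open Finset Function

section HallOnFibers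
variable {α β : Type*}

lemma sum_inv_card_fiber [Fintype α] [DecidableEq β] (κ : α → β) (hκ : Surjective κ)
    (B : Finset β) : ∑ x with κ x ∈ B, (Nat.card {y // κ y = κ x} : ℚ)⁻¹ = #B := by
  rw [← sum_fiberwise_of_maps_to (g := κ) (t := B) fun x hx => (mem_filter.mp hx).2,
    card_eq_sum_ones, Nat.cast_sum]
  refine sum_congr rfl fun q hq => ?_
  have hfiber :
      ({x | κ x ∈ B} : Finset α).filter (κ · = q) = ({x | κ x = q} : Finset α) := by
    ext x
    simp only [mem_filter, mem_univ, true_and, and_iff_right_iff_imp]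
    rintro rfl
    exact hq
  obtain ⟨a, rfl⟩ := hκ q
  have hcard : Nat.card {y // κ y = κ a} = #{y | κ y = κ a} := by
    rw [Nat.card_eq_fintype_card, Fintype.card_subtype]
  have hne : (#{y | κ y = κ a} : ℚ) ≠ 0 := by
    exact_mod_cast (card_pos.mpr ⟨a, by simp⟩).ne'
  rw [hfiber, sum_congr rfl fun x hx => by rw [(mem_filter.mp hx).2], hcard, sum_const,
    nsmul_eq_mul, mul_inv_cancel₀ hne, Nat.cast_one]

theorem exists_injective_forall_rel_of_fiber_card [Finite α] [Finite β]
    (κ : α → β) (hκ : Surjective κ) (r : β → β → Prop)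
    (hr : ∀ q q', r q q' → Nat.card {x // κ x = q} = Nat.card {x // κ x = q'})
    (f : α → α) (hf : Injective f) (hfr : ∀ x, r (κ x) (κ (f x))) :
    ∃ φ : β → β, Injective φ ∧ ∀ q, r q (φ q) := by
  classical
  have := Fintype.ofFinite α
  have := Fintype.ofFinite β
  refine (Fintype.all_card_le_filter_rel_iff_exists_injective r).mp fun A => ?_
  set N : Finset β := {q' | ∃ q ∈ A, r q q'}
  set w : α → ℚ := fun x => (Nat.card {y // κ y = κ x} : ℚ)⁻¹
  have hw : ∀ x, w (f x) = w x := fun x => by simp only [w, hr _ _ (hfr x)]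
  have hmaps : ({x | κ x ∈ A} : Finset α).image f ⊆ ({y | κ y ∈ N} : Finset α) := by
    intro y hy
    obtain ⟨x, hx, rfl⟩ := mem_image.mp hy
    simp only [N, mem_filter, mem_univ, true_and] at hx ⊢
    exact ⟨κ x, hx, hfr x⟩
  have key : (#A : ℚ) ≤ #N := calc
    (#A : ℚ) = ∑ x with κ x ∈ A, w x := (sum_inv_card_fiber κ hκ A).symm
    _ = ∑ x with κ x ∈ A, w (f x) := sum_congr rfl fun x _ => (hw x).symm
    _ = ∑ y ∈ ({x | κ x ∈ A} : Finset α).image f, w y :=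
        (sum_image fun x _ y _ h => hf h).symm
    _ ≤ ∑ y with κ y ∈ N, w y :=
        sum_le_sum_of_subset_of_nonneg hmaps fun _ _ _ => by positivity
    _ = #N := sum_inv_card_fiber κ hκ N
  exact_mod_cast key

end HallOnFibers

section Green
variable [Semigroup S] {a b c e f x s t : S}

lemma IsInverseOf.symm (h : IsInverseOf b a) : IsInverseOf a b := ⟨h.2, h.1⟩

lemma rSet_subset_of_mem (h : b ∈ rSet a) : rSet b ⊆ rSet a := by
  rcases h with rfl | ⟨s, rfl⟩
  · exact subset_rfl
  · rintro x (rfl | ⟨t, rfl⟩)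
    · exact Set.mem_insert_of_mem _ ⟨s, rfl⟩
    · exact Set.mem_insert_of_mem _ ⟨s * t, (mul_assoc a s t).symm⟩

lemma lSet_subset_of_mem (h : b ∈ lSet a) : lSet b ⊆ lSet a := by
  rcases h with rfl | ⟨s, rfl⟩
  · exact subset_rfl
  · rintro x (rfl | ⟨t, rfl⟩)
    · exact Set.mem_insert_of_mem _ ⟨s, rfl⟩
    · exact Set.mem_insert_of_mem _ ⟨t * s, mul_assoc t s a⟩

lemma greenR_of_mul_eq (h₁ : a * s = b) (h₂ : b * t = a) : greenR a b :=
  (rSet_subset_of_mem (Set.mem_insert_of_mem _ ⟨t, h₂⟩)).antisymm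
    (rSet_subset_of_mem (Set.mem_insert_of_mem _ ⟨s, h₁⟩))

lemma greenL_of_mul_eq (h₁ : s * a = b) (h₂ : t * b = a) : greenL a b :=
  (lSet_subset_of_mem (Set.mem_insert_of_mem _ ⟨t, h₂⟩)).antisymm
    (lSet_subset_of_mem (Set.mem_insert_of_mem _ ⟨s, h₁⟩))

lemma mem_rSet_of_greenR (h : greenR a b) : b ∈ rSet a := by
  rw [greenR.eq_def] at h
  exact h ▸ Set.mem_insert b _

lemma mem_lSet_of_greenL (h : greenL a b) : b ∈ lSet a := by
  rw [greenL.eq_def] at h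
  exact h ▸ Set.mem_insert b _

lemma mul_eq_of_greenR (he : IsIdempotentElem e) (h : greenR e x) : e * x = x := by
  rcases mem_rSet_of_greenR h with rfl | ⟨s, rfl⟩
  · exact he
  · rw [← mul_assoc, he.eq]

lemma mul_eq_of_greenL (he : IsIdempotentElem e) (h : greenL e x) : x * e = x := by
  rcases mem_lSet_of_greenL h with rfl | ⟨s, rfl⟩
  · exact he
  · rw [mul_assoc, he.eq]

lemma exists_mul_eq_of_greenR (he : IsIdempotentElem e) (h : greenR x e) : ∃ u, x * u = e := by
  rcases mem_rSet_of_greenR h with rfl | hu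
  · exact ⟨_, he⟩
  · exact hu

lemma exists_mul_eq_of_greenL (he : IsIdempotentElem e) (h : greenL x e) : ∃ v, v * x = e := by
  rcases mem_lSet_of_greenL h with rfl | hv
  · exact ⟨_, he⟩
  · exact hv

lemma IsInverseOf.isIdempotentElem_mul (h : IsInverseOf b a) : IsIdempotentElem (a * b) := by
  rw [IsIdempotentElem, ← mul_assoc, h.1]

lemma IsInverseOf.greenR_mul (h : IsInverseOf b a) : greenR a (a * b) :=
  greenR_of_mul_eq rfl h.1

lemma IsInverseOf.greenL_mul (h : IsInverseOf b a) : greenL b (a * b) :=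
  greenL_of_mul_eq rfl (by rw [← mul_assoc, h.2])

lemma IsIdempotentElem.eq_of_greenH (he : IsIdempotentElem e) (hf : IsIdempotentElem f)
    (h : greenH e f) : e = f :=
  (mul_eq_of_greenR hf h.2.symm).symm.trans (mul_eq_of_greenL he h.1)

lemma IsInverseOf.eq_of_greenH (hb : IsInverseOf b a) (hc : IsInverseOf c a) (h : greenH b c) :
    b = c := by
  have hab : a * b = a * c := hb.isIdempotentElem_mul.eq_of_greenH hc.isIdempotentElem_mul
    ⟨hb.greenL_mul.symm.trans (h.1.trans hc.greenL_mul), hb.greenR_mul.symm.trans hc.greenR_mul⟩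
  have hba : b * a = c * a := hb.symm.isIdempotentElem_mul.eq_of_greenH hc.symm.isIdempotentElem_mul
    ⟨hb.symm.greenL_mul.symm.trans hc.symm.greenL_mul,
      hb.symm.greenR_mul.symm.trans (h.2.trans hc.symm.greenR_mul)⟩
  calc b = b * a * b := hb.2.symm
    _ = c * (a * b) := by rw [hba, mul_assoc]
    _ = c := by rw [hab, ← mul_assoc, hc.2]

lemma exists_inverse_mul_eq (hx : ∃ c, IsInverseOf c x) (he : IsIdempotentElem e)
    (hf : IsIdempotentElem f) (hR : greenR e x) (hL : greenL f x) :
    ∃ y, IsInverseOf y x ∧ x * y = e ∧ y * x = f := by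
  obtain ⟨c, hc⟩ := hx
  obtain ⟨u, hu⟩ := exists_mul_eq_of_greenR he hR.symm
  obtain ⟨v, hv⟩ := exists_mul_eq_of_greenL hf hL.symm
  have hxy : x * (f * c * e) = e := by
    rw [← mul_assoc, ← mul_assoc, mul_eq_of_greenL hf hL, ← hu, ← mul_assoc, hc.1]
  have hyx : f * c * e * x = f := by
    rw [mul_assoc, mul_eq_of_greenR he hR, ← hv, mul_assoc, mul_assoc v, ← mul_assoc x, hc.1]
  refine ⟨f * c * e, ⟨?_, ?_⟩, hxy, hyx⟩
  · rw [hxy, mul_eq_of_greenR he hR]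
  · rw [hyx, ← mul_assoc, ← mul_assoc, hf.eq]

lemma IsInverseOf.exists_inverse_greenH (hb : IsInverseOf b a) (hax : greenH a x)
    (hx : ∃ c, IsInverseOf c x) : ∃ y, IsInverseOf y x ∧ greenH y b := by
  obtain ⟨y, hy, hxy, hyx⟩ := exists_inverse_mul_eq hx hb.isIdempotentElem_mul
    hb.symm.isIdempotentElem_mul (hb.greenR_mul.symm.trans hax.2)
    (hb.symm.greenL_mul.symm.trans hax.1)
  refine ⟨y, hy, ?_, ?_⟩
  · exact (hxy ▸ hy.greenL_mul).trans hb.greenL_mul.symm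
  · exact (hyx ▸ hy.symm.greenR_mul).trans hb.symm.greenR_mul.symm

end Green

section HClass
variable [Semigroup S]

def greenHSetoid (S : Type*) [Semigroup S] : Setoid S where
  r := greenH
  iseqv := ⟨fun _ => ⟨rfl, rfl⟩, fun h => ⟨h.1.symm, h.2.symm⟩,
    fun h h' => ⟨h.1.trans h'.1, h.2.trans h'.2⟩⟩

abbrev HClass (S : Type*) [Semigroup S] := Quotient (greenHSetoid S)

def hClass (a : S) : HClass S := Quotient.mk _ a

lemma hClass_surjective : Surjective (hClass (S := S)) := Quotient.mk_surjective

lemma hClass_eq_hClass {a b : S} : hClass a = hClass b ↔ greenH a b := Quotient.eq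

def HasInversesIn (q q' : HClass S) : Prop :=
  ∀ x, hClass x = q → ∃ y, IsInverseOf y x ∧ hClass y = q'

variable {a b : S} {q q' : HClass S}

lemma hasInversesIn_of_isInverseOf (hreg : IsRegularSemigroup S) (hb : IsInverseOf b a) :
    HasInversesIn (hClass a) (hClass b) := fun x hx => by
  obtain ⟨y, hy, hyb⟩ := hb.exists_inverse_greenH (hClass_eq_hClass.mp hx.symm) (hreg x)
  exact ⟨y, hy, hClass_eq_hClass.mpr hyb⟩

lemma HasInversesIn.symm (hreg : IsRegularSemigroup S) (h : HasInversesIn q q') :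
    HasInversesIn q' q := by
  obtain ⟨a, rfl⟩ := hClass_surjective q
  obtain ⟨b, hb, rfl⟩ := h a rfl
  exact hasInversesIn_of_isInverseOf hreg hb.symm

lemma HasInversesIn.card_le [Finite S] (h : HasInversesIn q q') :
    Nat.card {x // hClass x = q} ≤ Nat.card {y // hClass y = q'} := by
  choose g hg hgq' using fun x : {x // hClass x = q} => h x x.2
  refine Nat.card_le_card_of_injective (fun x => ⟨g x, hgq' x⟩) fun x x' hxx' => ?_
  have hgg : g x = g x' := congrArg Subtype.val hxx'
  have hg' : IsInverseOf (g x) x' := hgg ▸ hg x'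
  refine Subtype.ext ?_
  exact (hg x).symm.eq_of_greenH hg'.symm (hClass_eq_hClass.mp (x.2.trans x'.2.symm))

lemma HasInversesIn.card_eq [Finite S] (hreg : IsRegularSemigroup S) (h : HasInversesIn q q') :
    Nat.card {x // hClass x = q} = Nat.card {y // hClass y = q'} :=
  h.card_le.antisymm (h.symm hreg).card_le

end HClass

/-- Theorem 1.4 (i)⇔(ii). A finite regular semigroup has a permutation
matching iff it has a permutation matching preserving Green's H-relation. -/
theorem stmt_1 (S : Type*) [Semigroup S] [Fintype S]
    (hreg : IsRegularSemigroup S) :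
    (∃ f : S → S, IsPermMatching f) ↔
      ∃ f : S → S, IsPermMatching f ∧ ∀ a b : S, greenH a b → greenH (f a) (f b) := by
  constructor
  · rintro ⟨f, hf_bij, hf_inv⟩
    obtain ⟨φ, hφ_inj, hφ⟩ := exists_injective_forall_rel_of_fiber_card hClass
      hClass_surjective HasInversesIn (fun _ _ h => h.card_eq hreg) f hf_bij.1
      fun x => hasInversesIn_of_isInverseOf hreg (hf_inv x)
    choose g hg hgφ using fun a => hφ (hClass a) a rfl
    have hg_inj : Injective g := fun a a' h => by
      have haa' : hClass a = hClass a' := hφ_inj (by rw [← hgφ, ← hgφ, h])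
      exact (hg a).symm.eq_of_greenH (h ▸ hg a').symm (hClass_eq_hClass.mp haa')
    refine ⟨g, ⟨Finite.injective_iff_bijective.mp hg_inj, hg⟩, fun a b hab => ?_⟩
    rw [← hClass_eq_hClass, hgφ, hgφ, hClass_eq_hClass.mpr hab]
  · rintro ⟨f, hf, -⟩
    exact ⟨f, hf⟩
end

section
/- Let S be an orthodox semigroup. Then for every a ∈ S, V(V(a)) = {b ∈ S : V(b) = V(a)}; that is, the set of inverses of the set V(a) is exactly the class of a under the relation γ defined by a γ b iff V(a) = V(b). -/
variable {S : Type*}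

lemma key_orth [Semigroup S]
    (horth : ∀ e f : S, e * e = e → f * f = f → (e * f) * (e * f) = e * f)
    {a b c x : S} (hax : a * x * a = a) (hxa : x * a * x = x)
    (hbx : b * x * b = b) (hxb : x * b * x = x)
    (hac : a * c * a = a) (hca : c * a * c = c) :
    b * c * b = b ∧ c * b * c = c := by
  have Pax : ∀ t : S, a*(x*(a*t)) = a*t := fun t => by rw [← mul_assoc, ← mul_assoc, hax]
  have Pxa : ∀ t : S, x*(a*(x*t)) = x*t := fun t => by rw [← mul_assoc, ← mul_assoc, hxa]
  have Pbx : ∀ t : S, b*(x*(b*t)) = b*t := fun t => by rw [← mul_assoc, ← mul_assoc, hbx]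
  have Pxb : ∀ t : S, x*(b*(x*t)) = x*t := fun t => by rw [← mul_assoc, ← mul_assoc, hxb]
  have Pac : ∀ t : S, a*(c*(a*t)) = a*t := fun t => by rw [← mul_assoc, ← mul_assoc, hac]
  have Pca : ∀ t : S, c*(a*(c*t)) = c*t := fun t => by rw [← mul_assoc, ← mul_assoc, hca]
  have Qax : a*(x*a) = a := by rw [← mul_assoc, hax]
  have Qbx : b*(x*b) = b := by rw [← mul_assoc, hbx]
  have Qca : c*(a*c) = c := by rw [← mul_assoc, hca]
  have Ebx : (b*x)*(b*x) = b*x := by rw [← mul_assoc, hbx]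
  have Eac : (a*c)*(a*c) = a*c := by rw [← mul_assoc, hac]
  have Eca : (c*a)*(c*a) = c*a := by rw [← mul_assoc, hca]
  have Exb : (x*b)*(x*b) = x*b := by rw [← mul_assoc, hxb]
  have S1 : ∀ t : S, b*(x*(a*(c*(b*(x*(a*(c*t))))))) = b*(x*(a*(c*t))) := fun t => by
    have h : ((b*x)*(a*c))*((b*x)*(a*c))*t = ((b*x)*(a*c))*t := by rw [horth _ _ Ebx Eac]
    simp only [mul_assoc] at h; exact h
  have S2 : ∀ t : S, c*(a*(x*(b*(c*(a*(x*(b*t))))))) = c*(a*(x*(b*t))) := fun t => by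
    have h : ((c*a)*(x*b))*((c*a)*(x*b))*t = ((c*a)*(x*b))*t := by rw [horth _ _ Eca Exb]
    simp only [mul_assoc] at h; exact h
  have M4 : a*(c*b) = a*(x*b) := by
    conv_lhs => rw [← Qbx, ← Pxa b, ← Pax (c*(b*(x*(a*(x*b))))),
      ← Pxb (a*(c*(b*(x*(a*(x*b)))))), ← Pac (x*b), S1 (a*(x*b)), Pac (x*b),
      Pxb (a*(x*b)), Pax (x*b)]
  have M5 : b*(c*a) = b*(x*a) := by
    conv_lhs => rw [← Qax, ← Pbx (c*(a*(x*a))), ← Pxa (b*(c*(a*(x*a)))),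
      ← Pac (x*(b*(c*(a*(x*a))))), ← Pxb a, S2 (x*a), Pac (x*(b*(x*a))), Pxb a, Pxa a]
  have M6 : x*(b*c) = x*(a*c) := by
    conv_lhs => rw [← Pxa (b*c), ← Qca, ← Pac (x*(b*(c*(a*c)))), ← Pax c,
      ← Pxb (a*c), S2 (x*(a*c)), Pxb (a*c), Pac (x*(a*c)), Pxa (a*c)]
  have M4p : ∀ t : S, a*(c*(b*t)) = a*(x*(b*t)) := fun t => by
    have h : (a*(c*b))*t = (a*(x*b))*t := by rw [M4]
    simp only [mul_assoc] at h; exact h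
  have M5p : ∀ t : S, b*(c*(a*t)) = b*(x*(a*t)) := fun t => by
    have h : (b*(c*a))*t = (b*(x*a))*t := by rw [M5]
    simp only [mul_assoc] at h; exact h
  constructor
  · have h : b*(c*b) = b := by
      conv_lhs => rw [← Pca b, M4, M5p (x*b), Pxa b, Qbx]
    rw [mul_assoc]; exact h
  · have h : c*(b*c) = c := by
      conv_lhs => rw [← Pca (b*c), M4p c, M6, Pax c, Qca]
    rw [mul_assoc]; exact h

/-- Corollary 1.8. In an orthodox semigroup, `V(V(a))` is exactly the
γ-class `{b | V(b) = V(a)}` of `a`. -/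
theorem stmt_4 (S : Type*) [Semigroup S]
    (hreg : IsRegularSemigroup S)
    (horth : ∀ e f : S, e * e = e → f * f = f → (e * f) * (e * f) = e * f) :
    ∀ a : S, invsSet (invs a) = {b : S | invs b = invs a} := by
  intro a
  ext b
  constructor
  · intro hb
    simp only [invsSet, Set.mem_iUnion] at hb
    obtain ⟨x, hxVa, hbVx⟩ := hb
    obtain ⟨hax, hxa⟩ := hxVa
    obtain ⟨hxbx, hbxb⟩ := hbVx
    show invs b = invs a
    ext c
    constructor
    · rintro ⟨hbcb, hcbc⟩
      exact key_orth horth hbxb hxbx hax hxa hbcb hcbc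
    · rintro ⟨haca, hcac⟩
      exact key_orth horth hax hxa hbxb hxbx haca hcac
  · intro hb
    have hVb : invs b = invs a := hb
    obtain ⟨y, hy⟩ := hreg b
    have hyVa : y ∈ invs a := by rw [← hVb]; exact hy
    simp only [invsSet, Set.mem_iUnion]
    exact ⟨y, hyVa, hy.2, hy.1⟩
end

section
/- Let S be an orthodox semigroup. Then for every a ∈ S: (1) V(V(V(a))) = V(a), so the map sending V(a) to V(V(a)) is an involution on the set {V(a) : a ∈ S}; and (2) V(V(a)) = V(a) if and only if a = a*a*a. -/
variable {S : Type*}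

section AuxOrthodox

variable [Semigroup S]

lemma isInverseOf_symm {u v : S} (h : IsInverseOf u v) : IsInverseOf v u := ⟨h.2, h.1⟩

lemma mem_invs_iff {x a : S} : x ∈ invs a ↔ IsInverseOf x a := Iff.rfl

lemma mem_invsSet_iff {A : Set S} {x : S} :
    x ∈ invsSet A ↔ ∃ a ∈ A, IsInverseOf x a := by
  simp only [invsSet, Set.mem_iUnion, invs, Set.mem_setOf_eq, exists_prop]

/-- In an orthodox semigroup, any inverse of an idempotent is idempotent. -/
lemma lemM (horth : ∀ e f : S, e * e = e → f * f = f → (e * f) * (e * f) = e * f)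
    {e g : S} (he : e * e = e) (hg : IsInverseOf g e) : g * g = g := by
  obtain ⟨h1, h2⟩ := hg
  have hge : (g * e) * (g * e) = g * e := by
    calc (g * e) * (g * e) = (g * e * g) * e := by simp only [mul_assoc]
    _ = g * e := by rw [h2]
  have heg : (e * g) * (e * g) = e * g := by
    calc (e * g) * (e * g) = e * (g * e * g) := by simp only [mul_assoc]
    _ = e * g := by rw [h2]
  have key := horth _ _ hge heg
  have hgg : (g * e) * (e * g) = g := by
    calc (g * e) * (e * g) = g * (e * e) * g := by simp only [mul_assoc]
    _ = g * e * g := by rw [he]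
    _ = g := h2
  calc g * g = ((g * e) * (e * g)) * ((g * e) * (e * g)) := by rw [hgg]
  _ = (g * e) * (e * g) := key
  _ = g := hgg

/-- In an orthodox semigroup, `b' ∈ V(b)`, `a' ∈ V(a)` imply `b'a' ∈ V(ab)`. -/
lemma lemL (horth : ∀ e f : S, e * e = e → f * f = f → (e * f) * (e * f) = e * f)
    {a a' b b' : S} (ha : IsInverseOf a' a) (hb : IsInverseOf b' b) :
    IsInverseOf (b' * a') (a * b) := by
  obtain ⟨ha1, ha2⟩ := ha
  obtain ⟨hb1, hb2⟩ := hb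
  have he : (a' * a) * (a' * a) = a' * a := by
    calc (a' * a) * (a' * a) = (a' * a * a') * a := by simp only [mul_assoc]
    _ = a' * a := by rw [ha2]
  have hf : (b * b') * (b * b') = b * b' := by
    calc (b * b') * (b * b') = (b * b' * b) * b' := by simp only [mul_assoc]
    _ = b * b' := by rw [hb1]
  have hef := horth _ _ he hf
  have hfe := horth _ _ hf he
  have hae : a * (a' * a) = a := by rw [← mul_assoc]; exact ha1
  have hfb : (b * b') * b = b := hb1
  have hb'f : b' * (b * b') = b' := by rw [← mul_assoc]; exact hb2
  have hea' : (a' * a) * a' = a' := ha2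
  constructor
  · calc (a * b) * (b' * a') * (a * b)
        = a * ((b * b') * (a' * a)) * b := by simp only [mul_assoc]
    _ = (a * (a' * a)) * ((b * b') * (a' * a)) * ((b * b') * b) := by rw [hae, hfb]
    _ = a * (((a' * a) * (b * b')) * ((a' * a) * (b * b'))) * b := by simp only [mul_assoc]
    _ = a * ((a' * a) * (b * b')) * b := by rw [hef]
    _ = (a * (a' * a)) * ((b * b') * b) := by simp only [mul_assoc]
    _ = a * b := by rw [hae, hfb]
  · calc (b' * a') * (a * b) * (b' * a')
        = b' * ((a' * a) * (b * b')) * a' := by simp only [mul_assoc]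
    _ = (b' * (b * b')) * ((a' * a) * (b * b')) * ((a' * a) * a') := by rw [hb'f, hea']
    _ = b' * (((b * b') * (a' * a)) * ((b * b') * (a' * a))) * a' := by simp only [mul_assoc]
    _ = b' * ((b * b') * (a' * a)) * a' := by rw [hfe]
    _ = (b' * (b * b')) * ((a' * a) * a') := by simp only [mul_assoc]
    _ = b' * a' := by rw [hb'f, hea']

/-- Key lemma: in an orthodox semigroup, if `c ∈ V(a) ∩ V(b)` and `x ∈ V(a)`
then `x ∈ V(b)`. -/
lemma lemEoD (horth : ∀ e f : S, e * e = e → f * f = f → (e * f) * (e * f) = e * f)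
    {a b c x : S} (hca : IsInverseOf c a) (hcb : IsInverseOf c b)
    (hxa : IsInverseOf x a) : IsInverseOf x b := by
  have hbc : IsInverseOf b c := ⟨hcb.2, hcb.1⟩
  have hbx := lemL horth hxa hbc
  have hxb := lemL horth hbc hxa
  have hac : (a * c) * (a * c) = a * c := by
    calc (a * c) * (a * c) = (a * c * a) * c := by simp only [mul_assoc]
    _ = a * c := by rw [hca.1]
  have hca2 : (c * a) * (c * a) = c * a := by
    calc (c * a) * (c * a) = (c * a * c) * a := by simp only [mul_assoc]
    _ = c * a := by rw [hca.2]
  have hbxi := lemM horth hac hbx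
  have hxbi := lemM horth hca2 hxb
  simp only [← mul_assoc] at hbxi hxbi
  -- hbxi : b*x*b*x = b*x, hxbi : x*b*x*b = x*b
  have h5 : c * b * x * a * c = c := by
    have t := congrArg (fun y => c * y) hbx.1
    simp only [← mul_assoc] at t
    rw [hca.2] at t
    exact t
  have h6 : b * x * a * c * b = b := by
    have t := congrArg (fun y => b * y * b) h5
    simp only [← mul_assoc] at t
    rw [hcb.1] at t
    exact t
  have h7 : b * x * b = b := by
    have t := congrArg (fun y => b * x * y) h6
    simp only [← mul_assoc] at t
    rw [hbxi] at t
    exact t.symm.trans h6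
  have h8 : c * a * x * b * c = c := by
    have hca2' : c * (a * c) = c := by rw [← mul_assoc]; exact hca.2
    have t := congrArg (fun y => y * c) hxb.1
    simp only [mul_assoc] at t
    rw [hca2'] at t
    simp only [← mul_assoc] at t
    exact t
  have h9 : x * b * c = x * a * c := by
    have t1 := congrArg (fun y => x * a * y) h8
    simp only [← mul_assoc] at t1
    have t2 : x * (a * c * a) * (x * b * c) = x * a * (x * b * c) := by rw [hca.1]
    simp only [← mul_assoc] at t2
    rw [hxa.2] at t2
    exact t2.symm.trans t1
  have h10 : x * b * c * a * x = x := by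
    have t := congrArg (fun y => y * (a * x)) h9
    simp only [← mul_assoc] at t
    have t3 : x * (a * c * a) * x = x * a * x := by rw [hca.1]
    simp only [← mul_assoc] at t3
    rw [hxa.2] at t3
    exact t.trans t3
  have h11 : x * b * x = x := by
    have t := congrArg (fun y => x * b * y) h10
    simp only [← mul_assoc] at t
    rw [hxbi] at t
    exact t.symm.trans h10
  exact ⟨h7, h11⟩

end AuxOrthodox

/-- Corollary 1.10. In an orthodox semigroup, for every `a`:
(1) `V(V(V(a))) = V(a)`, so `V(a) ↦ V(V(a))` is an involution on `{V(a) : a ∈ S}`;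
(2) `V(V(a)) = V(a)` iff `a = a*a*a`. -/
theorem stmt_5 (S : Type*) [Semigroup S]
    (hreg : IsRegularSemigroup S)
    (horth : ∀ e f : S, e * e = e → f * f = f → (e * f) * (e * f) = e * f) :
    ∀ a : S, invsSet (invsSet (invs a)) = invs a ∧
      (invsSet (invs a) = invs a ↔ a = a * a * a) := by
  intro a
  constructor
  · ext x
    rw [mem_invsSet_iff, mem_invs_iff]
    constructor
    · rintro ⟨y, hy, hxy⟩
      rw [mem_invsSet_iff] at hy
      obtain ⟨b, hb, hyb⟩ := hy
      rw [mem_invs_iff] at hb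
      exact lemEoD horth (isInverseOf_symm hyb) hb hxy
    · intro hx
      obtain ⟨y, hy⟩ := hreg x
      refine ⟨y, ?_, isInverseOf_symm hy⟩
      rw [mem_invsSet_iff]
      exact ⟨x, hx, hy⟩
  · constructor
    · intro h
      obtain ⟨b, hb⟩ := hreg a
      have haa : a ∈ invsSet (invs a) := by
        rw [mem_invsSet_iff]
        exact ⟨b, hb, isInverseOf_symm hb⟩
      rw [h, mem_invs_iff] at haa
      exact haa.1.symm
    · intro h
      have haa : IsInverseOf a a := ⟨h.symm, h.symm⟩
      ext x
      rw [mem_invsSet_iff, mem_invs_iff]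
      constructor
      · rintro ⟨b, hb, hxb⟩
        rw [mem_invs_iff] at hb
        exact lemEoD horth (isInverseOf_symm hb) haa hxb
      · intro hx
        exact ⟨a, haa, hx⟩
end

section
/- Let S be a finite regular semigroup. Then S is completely regular (every element of S lies in a subgroup of S; equivalently, for every x ∈ S there exists y ∈ S with x*y*x = x and x*y = y*x) if and only if the map f : S → S given by f(x) = x^{ω-1} is a permutation matching of S. -/
/-!
In a completely regular semigroup every `x` lies in a subgroup `H`. An idempotent power of `x`
then lies in `H`, so it is the identity `e` of `H`, and `x^(ω-1)` is the inverse of `x` in `H`.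
Hence `x^(ω-1) ∈ V(x)`, and `x ↦ x^(ω-1)` is injective: if `c = x^(ω-1)` then `x^ω = c^ω`, so
`x = x^ω x = c^ω x` is determined by `c`. Finiteness turns injectivity into bijectivity.
Conversely, `x^(ω-1)` commutes with `x`, so if it is an inverse of `x` then `x` is completely
regular.

Powers are computed in the monoid `S¹ = WithOne S`, where `spow x k` becomes `x ^ (k + 1)`.
-/

variable {S : Type*}

section Monoid

variable {M : Type*} [Monoid M]

theorem pow_succ_eq_self_of_commute {x y : M} {n : ℕ} (hxyx : x * y * x = x)
    (hxy : Commute x y) (hn : n ≠ 0) (he : IsIdempotentElem (x ^ n)) : x ^ (n + 1) = x := by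
  have hx : x * (x * y) = x := by rw [hxy.eq, ← mul_assoc, hxyx]
  have hxy_idem : IsIdempotentElem (x * y) := by
    rw [IsIdempotentElem, ← mul_assoc, hxyx]
  calc x ^ (n + 1) = x ^ (n + 1) * (x * y) ^ n := by
        rw [hxy_idem.pow_eq hn, pow_succ, mul_assoc, hx]
    _ = x ^ (n + n + 1) * y ^ n := by
        rw [hxy.mul_pow, ← mul_assoc, ← pow_add, Nat.add_right_comm]
    _ = x * (x * y) ^ n := by
        rw [pow_succ, pow_add, he.eq, ← pow_succ, pow_succ', mul_assoc, ← hxy.mul_pow]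
    _ = x := by rw [hxy_idem.pow_eq hn, hx]

section GroupElement

-- `a ^ (k + 3) = a` says that `a` lies in the cyclic group `{a, …, a ^ (k + 2)}`, whose identity
-- is `a ^ (k + 2)` and in which `a ^ (k + 1)` is the inverse of `a`.
variable {a : M} {k : ℕ}

theorem isIdempotentElem_pow_of_pow_add_three_eq (ha : a ^ (k + 3) = a) :
    IsIdempotentElem (a ^ (k + 2)) := by
  rw [IsIdempotentElem, ← pow_add, show k + 2 + (k + 2) = k + 1 + (k + 3) by ring, pow_add, ha,
    ← pow_succ]

theorem isInverseOf_pow_of_pow_add_three_eq (ha : a ^ (k + 3) = a) :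
    IsInverseOf (a ^ (k + 1)) a := by
  constructor
  · rw [← pow_succ', ← pow_succ, ha]
  · rw [← pow_succ, ← pow_add, show k + 2 + (k + 1) = k + (k + 3) by ring, pow_add, ha,
      ← pow_succ]

theorem pow_pow_add_two_eq_of_pow_add_three_eq (ha : a ^ (k + 3) = a) :
    (a ^ (k + 1)) ^ (k + 2) = a ^ (k + 2) := by
  rw [← pow_mul, mul_comm, pow_mul,
    (isIdempotentElem_pow_of_pow_add_three_eq ha).pow_eq (by omega)]

end GroupElement

theorem pow_eq_pow_of_isIdempotentElem {c : M} {p q : ℕ} (hp : IsIdempotentElem (c ^ p))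
    (hq : IsIdempotentElem (c ^ q)) (hp0 : p ≠ 0) (hq0 : q ≠ 0) : c ^ p = c ^ q := by
  rw [← hp.pow_eq hq0, ← hq.pow_eq hp0, ← pow_mul, ← pow_mul, mul_comm]

theorem eq_of_pow_add_one_eq {a b : M} {k m : ℕ} (ha : a ^ (k + 3) = a) (hb : b ^ (m + 3) = b)
    (h : a ^ (k + 1) = b ^ (m + 1)) : a = b := by
  have hca : (b ^ (m + 1)) ^ (k + 2) = a ^ (k + 2) :=
    h ▸ pow_pow_add_two_eq_of_pow_add_three_eq ha
  have hcb : (b ^ (m + 1)) ^ (m + 2) = b ^ (m + 2) := pow_pow_add_two_eq_of_pow_add_three_eq hb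
  have he : a ^ (k + 2) = b ^ (m + 2) := by
    rw [← hca, ← hcb]
    exact pow_eq_pow_of_isIdempotentElem (hca ▸ isIdempotentElem_pow_of_pow_add_three_eq ha)
      (hcb ▸ isIdempotentElem_pow_of_pow_add_three_eq hb) (by omega) (by omega)
  calc a = a ^ (k + 2) * a := by rw [← pow_succ, ha]
    _ = b * (a ^ (k + 1) * a) := by rw [he, pow_succ', h, mul_assoc]
    _ = b ^ (m + 3) := by rw [← pow_succ, he, ← pow_succ']
    _ = b := hb

end Monoid

section Semigroup

variable [Semigroup S]

@[simp, norm_cast]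
theorem WithOne.coe_spow (x : S) (k : ℕ) :
    ((spow x k : S) : WithOne S) = (x : WithOne S) ^ (k + 1) := by
  induction k with
  | zero => simp [spow]
  | succ k ih => simp [spow, ih, pow_succ _ (k + 1)]

theorem isInverseOf_coe_iff {a b : S} : IsInverseOf (b : WithOne S) a ↔ IsInverseOf b a := by
  simp only [IsInverseOf, ← WithOne.coe_mul, WithOne.coe_inj]

end Semigroup

theorem stmt_6_general (S : Type*) [Semigroup S] [Fintype S]
    (f : S → S) (hf : ∀ x : S, IsOmegaMinusOne x (f x)) :
    (∀ x : S, ∃ y : S, x * y * x = x ∧ x * y = y * x) ↔ IsPermMatching f := by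
  constructor
  · intro hcr
    have hgroup : ∀ x : S, ∃ k,
        (f x : WithOne S) = x ^ (k + 1) ∧ (x : WithOne S) ^ (k + 3) = x := by
      intro x
      obtain ⟨k, hfx, hidem, -⟩ := hf x
      obtain ⟨y, hxyx, hxy⟩ := hcr x
      refine ⟨k, by rw [hfx, WithOne.coe_spow], pow_succ_eq_self_of_commute (y := (y : WithOne S))
        (by exact_mod_cast hxyx) (by unfold Commute SemiconjBy; exact_mod_cast hxy) (by omega) ?_⟩
      rw [IsIdempotentElem, ← WithOne.coe_spow, ← WithOne.coe_mul, hidem]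
    refine ⟨Finite.injective_iff_bijective.mp fun a b hab => ?_, fun a => ?_⟩
    · obtain ⟨k, hfa, ha⟩ := hgroup a
      obtain ⟨m, hfb, hb⟩ := hgroup b
      exact WithOne.coe_injective (eq_of_pow_add_one_eq ha hb (by rw [← hfa, ← hfb, hab]))
    · obtain ⟨k, hfa, ha⟩ := hgroup a
      rw [invs, Set.mem_ofPred_eq, ← isInverseOf_coe_iff, hfa]
      exact isInverseOf_pow_of_pow_add_three_eq ha
  · rintro ⟨-, hinv⟩ x
    obtain ⟨k, hfx, -⟩ := hf x
    refine ⟨f x, (hinv x).1, WithOne.coe_injective ?_⟩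
    simp only [WithOne.coe_mul, hfx, WithOne.coe_spow, ← pow_succ, ← pow_succ']

/-- Theorem 2.1(i). A finite regular semigroup is completely regular
iff the map `x ↦ x^(ω-1)` is a permutation matching. -/
theorem stmt_6 (S : Type*) [Semigroup S] [Fintype S]
    (hreg : IsRegularSemigroup S)
    (f : S → S) (hf : ∀ x : S, IsOmegaMinusOne x (f x)) :
    (∀ x : S, ∃ y : S, x * y * x = x ∧ x * y = y * x) ↔ IsPermMatching f :=
  stmt_6_general S f hf
end

section
/- Let S be a finite regular semigroup. Then S is completely simple (equivalently, since S is finite, S is simple: for all a, b ∈ S, b lies in the two-sided ideal generated by a, i.e. b = a or b = x*a or b = a*y or b = x*a*y for some x, y ∈ S) if and only if for every y ∈ S the map f : S → S given by f(x) = x^{ω-1} * (x*y*x)^ω is a permutation matching of S. -/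
variable {S : Type*}

section helpers
variable [Semigroup S]

lemma spow_succ (x : S) (n : ℕ) : spow x (n+1) = spow x n * x := rfl

lemma spow_mul_comm (x : S) : ∀ n, x * spow x n = spow x n * x
  | 0 => rfl
  | n+1 => by
    show x * (spow x n * x) = spow x n * x * x
    rw [← mul_assoc, spow_mul_comm x n]

lemma spow_succ_left (x : S) (n : ℕ) : spow x (n+1) = x * spow x n :=
  (spow_mul_comm x n).symm

lemma spow_add (x : S) (m n : ℕ) : spow x (m + n + 1) = spow x m * spow x n := by
  induction n with
  | zero => rfl
  | succ n ih =>
    show spow x (m + n + 1) * x = spow x m * (spow x n * x)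
    rw [ih, mul_assoc]

lemma spow_spow (x : S) (m n : ℕ) : spow (spow x m) n = spow x (m*n + m + n) := by
  induction n with
  | zero =>
    show spow x m = spow x (m*0 + m + 0)
    norm_num
  | succ n ih =>
    show spow (spow x m) n * spow x m = spow x (m*(n+1) + m + (n+1))
    rw [ih, ← spow_add, show m*n + m + n + m + 1 = m*(n+1) + m + (n+1) from by ring]

lemma spow_of_idem {e : S} (he : e * e = e) : ∀ n, spow e n = e
  | 0 => rfl
  | n+1 => by show spow e n * e = e; rw [spow_of_idem he n, he]

lemma idem_spow_unique {x : S} {i j : ℕ}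
    (hi : spow x i * spow x i = spow x i) (hj : spow x j * spow x j = spow x j) :
    spow x i = spow x j := by
  have h1 : spow (spow x i) j = spow x i := spow_of_idem hi j
  have h2 : spow (spow x j) i = spow x j := spow_of_idem hj i
  rw [spow_spow] at h1 h2
  rw [← h1, ← h2, show i*j + i + j = j*i + j + i from by ring]

lemma exists_idem_spow [Fintype S] (x : S) : ∃ m, spow x m * spow x m = spow x m := by
  obtain ⟨i, j, hne, heq⟩ := Finite.exists_ne_map_eq_of_infinite (fun n : ℕ => spow x n)
  wlog h : i < j generalizing i j
  · exact this j i hne.symm heq.symm (by omega)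
  obtain ⟨d, hd, rfl⟩ : ∃ d, 0 < d ∧ j = i + d := ⟨j - i, by omega, by omega⟩
  have stepA : ∀ n, spow x (i + n + d) = spow x (i + n) := by
    intro n
    induction n with
    | zero => simpa using heq.symm
    | succ n ih =>
      rw [show i + (n+1) + d = (i + n + d) + 1 from by omega, spow_succ, ih]
      rfl
  have stepB : ∀ t n, spow x (i + n + t * d) = spow x (i + n) := by
    intro t
    induction t with
    | zero => simp
    | succ t ih =>
      intro n
      rw [show i + n + (t+1)*d = i + (n + t*d) + d from by ring, stepA (n + t*d),
        show i + (n + t*d) = i + n + t*d from by ring]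
      exact ih n
  have hge : i + 1 ≤ (i+1)*d := by
    calc i + 1 = (i+1)*1 := by ring
    _ ≤ (i+1)*d := Nat.mul_le_mul_left _ hd
  refine ⟨i + ((i+1)*d - 1 - i), ?_⟩
  set n := (i+1)*d - 1 - i with hn
  rw [← spow_add, show i + n + (i + n) + 1 = i + n + (i+1) * d from by omega]
  exact stepB (i+1) n

lemma sandwich {A x B : S} (h : x = A * x * B) : ∀ n, x = spow A n * x * spow B n := by
  intro n
  induction n with
  | zero => exact h
  | succ n ih =>
    calc x = spow A n * x * spow B n := ih
    _ = spow A n * (A * x * B) * spow B n := by rw [← h]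
    _ = spow A (n+1) * x * spow B (n+1) := by
        simp only [spow_succ, mul_assoc, spow_mul_comm]

lemma absorb [Fintype S] {A x B : S} (h : x = A * x * B) :
    ∃ m, (spow A m * spow A m = spow A m) ∧ (spow B m * spow B m = spow B m) ∧
      spow A m * x = x ∧ x * spow B m = x := by
  obtain ⟨a, ha⟩ := exists_idem_spow A
  obtain ⟨b, hb⟩ := exists_idem_spow B
  have hA : spow A (a*b + a + b) = spow A a := by
    rw [← spow_spow]; exact spow_of_idem ha b
  have hB : spow B (a*b + a + b) = spow B b := by
    rw [show a*b + a + b = b*a + b + a from by ring, ← spow_spow]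
    exact spow_of_idem hb a
  set m := a*b + a + b with hm
  have hAi : spow A m * spow A m = spow A m := by rw [hA]; exact ha
  have hBi : spow B m * spow B m = spow B m := by rw [hB]; exact hb
  have hx : x = spow A m * x * spow B m := sandwich h m
  refine ⟨m, hAi, hBi, ?_, ?_⟩
  · calc spow A m * x = spow A m * (spow A m * x * spow B m) := by rw [← hx]
    _ = (spow A m * spow A m) * x * spow B m := by simp only [mul_assoc]
    _ = spow A m * x * spow B m := by rw [hAi]
    _ = x := hx.symm
  · calc x * spow B m = (spow A m * x * spow B m) * spow B m := by rw [← hx]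
    _ = spow A m * x * (spow B m * spow B m) := by simp only [mul_assoc]
    _ = spow A m * x * spow B m := by rw [hBi]
    _ = x := hx.symm

lemma period {x : S} {r : ℕ} (hrx : spow x r * x = x) :
    ∀ j, spow x (j + r + 1) = spow x j := by
  intro j
  induction j with
  | zero =>
    rw [show 0 + r + 1 = r + 1 from by omega, spow_succ, hrx]
    rfl
  | succ j ih =>
    rw [show j + 1 + r + 1 = (j + r + 1) + 1 from by omega, spow_succ, ih]
    rfl

/-- In a finite semigroup where `b = p*a*q` is always solvable, every element
lies in a subgroup: `x^ω * x = x`. -/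
lemma cl1 [Fintype S] (hs' : ∀ a b : S, ∃ p q : S, b = p * a * q) (x : S) :
    ∃ r, spow x r * spow x r = spow x r ∧ spow x r * x = x ∧ x * spow x r = x := by
  obtain ⟨p, q, hpq⟩ := hs' (x*x) x
  have h1 : x = p * x * (x*q) := hpq.trans (by simp only [mul_assoc])
  obtain ⟨m, -, -, -, hxB⟩ := absorb h1
  have hxx : ∃ s : S, x = x * x * s := by
    cases m with
    | zero => exact ⟨q, hxB.symm.trans (mul_assoc x x q).symm⟩
    | succ n =>
      refine ⟨q * spow (x*q) n, ?_⟩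
      calc x = x * spow (x*q) (n+1) := hxB.symm
      _ = x * ((x*q) * spow (x*q) n) := by rw [spow_succ_left]
      _ = x * x * (q * spow (x*q) n) := by simp only [mul_assoc]
  obtain ⟨s, hs⟩ := hxx
  obtain ⟨m', hAi, -, hAx, -⟩ := absorb hs
  exact ⟨m', hAi, hAx, by rw [spow_mul_comm]; exact hAx⟩

/-- Any idempotent positive power of `x*y*x` acts as an identity on `x`. -/
lemma cl2 [Fintype S] (hs' : ∀ a b : S, ∃ p q : S, b = p * a * q) (x y : S) {j : ℕ}
    (hj : spow (x*y*x) j * spow (x*y*x) j = spow (x*y*x) j) :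
    spow (x*y*x) j * x = x ∧ x * spow (x*y*x) j = x := by
  obtain ⟨p, q, hpq⟩ := hs' (x*y*x) x
  -- x = w * (x*y*x)
  have ha : x = (p*x*y) * x * q := hpq.trans (by simp only [mul_assoc])
  obtain ⟨m, -, -, hAx, -⟩ := absorb ha
  have hw : ∃ w : S, x = w * (x*y*x) := by
    cases m with
    | zero =>
      refine ⟨p, ?_⟩
      calc x = spow (p*x*y) 0 * x := hAx.symm
      _ = p * (x*y*x) := by simp only [spow]; simp only [mul_assoc]
    | succ n =>
      refine ⟨spow (p*x*y) n * p, ?_⟩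
      calc x = spow (p*x*y) (n+1) * x := hAx.symm
      _ = spow (p*x*y) n * (p*x*y) * x := by rw [spow_succ]
      _ = (spow (p*x*y) n * p) * (x*y*x) := by simp only [mul_assoc]
  -- x = (x*y*x) * z
  have hb : x = p * x * (y*(x*q)) := hpq.trans (by simp only [mul_assoc])
  obtain ⟨m', -, -, -, hBx⟩ := absorb hb
  have hz : ∃ z : S, x = (x*y*x) * z := by
    cases m' with
    | zero =>
      refine ⟨q, ?_⟩
      calc x = x * spow (y*(x*q)) 0 := hBx.symm
      _ = (x*y*x) * q := by simp only [spow]; simp only [mul_assoc]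
    | succ n =>
      refine ⟨q * spow (y*(x*q)) n, ?_⟩
      calc x = x * spow (y*(x*q)) (n+1) := hBx.symm
      _ = x * ((y*(x*q)) * spow (y*(x*q)) n) := by rw [spow_succ_left]
      _ = (x*y*x) * (q * spow (y*(x*q)) n) := by simp only [mul_assoc]
  obtain ⟨w, hw⟩ := hw
  obtain ⟨z, hz⟩ := hz
  obtain ⟨r, hridem, hrc, -⟩ := cl1 hs' (x*y*x)
  have hje : spow (x*y*x) j = spow (x*y*x) r := idem_spow_unique hj hridem
  constructor
  · calc spow (x*y*x) j * x
        = spow (x*y*x) j * (x*y*x*z) := by exact congrArg (fun t => spow (x*y*x) j * t) hz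
    _ = spow (x*y*x) j * (x*y*x) * z := (mul_assoc _ _ _).symm
    _ = spow (x*y*x) r * (x*y*x) * z := by rw [hje]
    _ = (x*y*x) * z := by rw [hrc]
    _ = x := hz.symm
  · calc x * spow (x*y*x) j
        = (w * (x*y*x)) * spow (x*y*x) j := by exact congrArg (fun t => t * spow (x*y*x) j) hw
    _ = w * ((x*y*x) * spow (x*y*x) j) := mul_assoc _ _ _
    _ = w * (spow (x*y*x) j * (x*y*x)) := by rw [spow_mul_comm]
    _ = w * (spow (x*y*x) r * (x*y*x)) := by rw [hje]
    _ = w * (x*y*x) := by rw [hrc]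
    _ = x := hw.symm

/-- `x^(ω-1)` is an inverse of `x` (when `x` lies in a subgroup). -/
lemma cl4 [Fintype S] (hs' : ∀ a b : S, ∃ p q : S, b = p * a * q) (x u : S)
    (hu : IsOmegaMinusOne x u) : x * u * x = x ∧ u * x * u = u := by
  obtain ⟨r, hridem, hrx, -⟩ := cl1 hs' x
  obtain ⟨k, hk, hkidem, -⟩ := hu
  have he : spow x (k+1) = spow x r := idem_spow_unique hkidem hridem
  subst hk
  constructor
  · rw [← spow_succ_left, he, hrx]
  · rw [← spow_succ, he, ← spow_add, show r + k + 1 = k + r + 1 from by omega]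
    exact period hrx k

/-- taking `ω-1` twice returns to the start. -/
lemma cl5 [Fintype S] (hs' : ∀ a b : S, ∃ p q : S, b = p * a * q) (x u w : S)
    (hu : IsOmegaMinusOne x u) (hw : IsOmegaMinusOne u w) : w = x := by
  obtain ⟨r, hridem, hrx, -⟩ := cl1 hs' x
  obtain ⟨k, hk, hk1, -⟩ := hu
  subst hk
  obtain ⟨k', hk', hk1', -⟩ := hw
  rw [spow_spow] at hk' hk1'
  have hE1 : spow x (k+1) = spow x r := idem_spow_unique hk1 hridem
  have hE2 : spow x (k*(k'+1) + k + (k'+1)) = spow x r := idem_spow_unique hk1' hridem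
  calc w = spow x (k*k' + k + k') := hk'
  _ = spow x (k*k' + k + k' + r + 1) := (period hrx _).symm
  _ = spow x (k*k' + k + k') * spow x r := spow_add x _ _
  _ = spow x (k*k' + k + k') * spow x (k+1) := by rw [hE1]
  _ = spow x (k*k' + k + k') * (spow x k * x) := by rw [spow_succ]
  _ = (spow x (k*k' + k + k') * spow x k) * x := by rw [mul_assoc]
  _ = spow x (k*k' + k + k' + k + 1) * x := by rw [spow_add]
  _ = spow x (k*(k'+1) + k + (k'+1)) * x := by
      rw [show k*k' + k + k' + k + 1 = k*(k'+1) + k + (k'+1) from by ring]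
  _ = spow x r * x := by rw [hE2]
  _ = x := hrx

end helpers

/-- Theorem 2.1(ii). A finite regular semigroup is (completely) simple
iff for every `y` the map `x ↦ x^(ω-1) * (x*y*x)^ω` is a permutation matching. -/
theorem stmt_7 (S : Type*) [Semigroup S] [Fintype S]
    (hreg : IsRegularSemigroup S)
    (f : S → S → S)
    (hf : ∀ y x : S, ∃ u v : S, IsOmegaMinusOne x u ∧ IsOmega (x * y * x) v ∧
      f y x = u * v) :
    (∀ a b : S, b = a ∨ (∃ x, b = x * a) ∨ (∃ y, b = a * y) ∨ ∃ x y, b = x * a * y) ↔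
      ∀ y : S, IsPermMatching (f y) := by
  constructor
  · intro hS
    -- upgrade simplicity to the uniform two-sided form using regularity
    have hs' : ∀ a b : S, ∃ p q : S, b = p * a * q := by
      intro a b
      obtain ⟨b', hb1, hb2⟩ := hreg b
      have key : (b*b') * b * (b'*b) = b := by
        rw [hb1, ← mul_assoc, hb1]
      have h5 : ∀ m : S, b = m → b = (b*b') * m * (b'*b) := by
        intro m hm
        rw [← hm]
        exact key.symm
      rcases hS a b with h | ⟨c, h⟩ | ⟨c, h⟩ | ⟨c, d, h⟩
      · exact ⟨b*b', b'*b, h5 a h⟩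
      · exact ⟨b*b'*c, b'*b, by simpa only [mul_assoc] using h5 (c*a) h⟩
      · exact ⟨b*b', c*(b'*b), by simpa only [mul_assoc] using h5 (a*c) h⟩
      · exact ⟨b*b'*c, d*(b'*b), by simpa only [mul_assoc] using h5 (c*a*d) h⟩
    -- the map always computes x^(ω-1)
    have hfeq : ∀ y x : S, ∃ u, IsOmegaMinusOne x u ∧ f y x = u := by
      intro y x
      obtain ⟨u, v, hu, hv, hfx⟩ := hf y x
      obtain ⟨⟨j, hj⟩, hvv⟩ := hv
      subst hj
      have hxv : x * spow (x*y*x) j = x := (cl2 hs' x y hvv).2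
      refine ⟨u, hu, ?_⟩
      rw [hfx]
      obtain ⟨k, hk, -, -⟩ := hu
      subst hk
      cases k with
      | zero => exact hxv
      | succ n =>
        calc spow x (n+1) * spow (x*y*x) j
            = spow x n * (x * spow (x*y*x) j) := mul_assoc _ _ _
        _ = spow x n * x := by rw [hxv]
    intro y
    constructor
    · have hinvol : Function.Involutive (f y) := by
        intro x
        obtain ⟨u, hu, hfx⟩ := hfeq y x
        obtain ⟨w, hw, hfu⟩ := hfeq y u
        rw [hfx, hfu]
        exact cl5 hs' x u w hu hw
      exact hinvol.bijective
    · intro a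
      obtain ⟨u, hu, hfa⟩ := hfeq y a
      rw [hfa]
      exact cl4 hs' a u hu
  · intro hM a b
    obtain ⟨u, v, hu, hv, hfb⟩ := hf a b
    have hbinv : b * f a b * b = b := ((hM a).2 b).1
    rw [hfb] at hbinv
    obtain ⟨⟨j, hj⟩, -⟩ := hv
    subst hj
    right; right; right
    cases j with
    | zero =>
      refine ⟨b * u * b, b * b, ?_⟩
      calc b = b * (u * spow (b*a*b) 0) * b := hbinv.symm
      _ = b * u * b * a * (b * b) := by simp only [spow]; simp only [mul_assoc]
    | succ n =>
      refine ⟨b * u * (spow (b*a*b) n * b), b * b, ?_⟩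
      calc b = b * (u * spow (b*a*b) (n+1)) * b := hbinv.symm
      _ = b * (u * (spow (b*a*b) n * (b*a*b))) * b := by rw [spow_succ]
      _ = b * u * (spow (b*a*b) n * b) * a * (b * b) := by simp only [mul_assoc]
end

section
/- Let S be a finite regular semigroup. Then S is a rectangular band (i.e. a*b*a = a for all a, b ∈ S) if and only if every bijection f : S → S is a permutation matching of S. -/
variable {S : Type*}

/-- Theorem 2.1(v). A finite regular semigroup is a rectangular band
iff every bijection of `S` is a permutation matching. -/
theorem stmt_10 (S : Type*) [Semigroup S] [Fintype S]
    (hreg : IsRegularSemigroup S) :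
    (∀ a b : S, a * b * a = a) ↔
      ∀ f : S → S, Function.Bijective f → IsPermMatching f := by
  constructor
  · intro h f hf
    exact ⟨hf, fun a => ⟨h a (f a), h (f a) a⟩⟩
  · intro h a b
    classical
    have := (h (Equiv.swap a b) (Equiv.swap a b).bijective).2 a
    rw [Equiv.swap_apply_left] at this
    exact this.1
end

section
/- Let S be an orthodox semigroup that has exactly one permutation matching. Then S is an inverse semigroup, i.e. every element of S has exactly one inverse. -/
variable {S : Type*}

/-- Key computation: if `e, f` are idempotent, `w*f = w` and `e*z = z`, then
in an orthodox semigroup `w*e*f*z = w*z`. -/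
private lemma lemB [Semigroup S]
    (horth : ∀ e f : S, e * e = e → f * f = f → (e * f) * (e * f) = e * f)
    {e f w z : S} (he : e * e = e) (hf : f * f = f)
    (hwf : w * f = w) (hez : e * z = z) :
    w * (e * (f * z)) = w * z := by
  have hfe : (f * e) * (f * e) = f * e := horth f e hf he
  calc w * (e * (f * z)) = (w * f) * (e * (f * (e * z))) := by rw [hwf, hez]
    _ = w * (((f * e) * (f * e)) * z) := by simp only [mul_assoc]
    _ = w * ((f * e) * z) := by rw [hfe]
    _ = (w * f) * (e * z) := by simp only [mul_assoc]
    _ = w * z := by rw [hwf, hez]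

/-- Hall's lemma: in an orthodox semigroup, if `x` is a common inverse of `a` and `b`,
then every inverse of `a` is an inverse of `b`. -/
private lemma hall [Semigroup S]
    (horth : ∀ e f : S, e * e = e → f * f = f → (e * f) * (e * f) = e * f)
    {a b x y : S} (hxa : IsInverseOf x a) (hxb : IsInverseOf x b)
    (hya : IsInverseOf y a) : IsInverseOf y b := by
  obtain ⟨haxa, hxax⟩ := hxa
  obtain ⟨hbxb, hxbx⟩ := hxb
  obtain ⟨haya, hyay⟩ := hya
  -- idempotents
  have hxb_e : (x * b) * (x * b) = x * b := by
    calc (x * b) * (x * b) = (x * b * x) * b := by simp only [mul_assoc]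
      _ = x * b := by rw [hxbx]
  have hbx_e : (b * x) * (b * x) = b * x := by
    calc (b * x) * (b * x) = (b * x * b) * x := by simp only [mul_assoc]
      _ = b * x := by rw [hbxb]
  have hya_e : (y * a) * (y * a) = y * a := by
    calc (y * a) * (y * a) = (y * a * y) * a := by simp only [mul_assoc]
      _ = y * a := by rw [hyay]
  have hay_e : (a * y) * (a * y) = a * y := by
    calc (a * y) * (a * y) = (a * y * a) * y := by simp only [mul_assoc]
      _ = a * y := by rw [haya]
  -- Step A : a*x*b*y*a*x = a*x
  have hA : a * (x * (b * (y * (a * x)))) = a * x := by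
    have h1 : a * ((x * b) * ((y * a) * x)) = a * x := by
      refine lemB horth hxb_e hya_e ?_ ?_
      · calc a * (y * a) = a * y * a := by rw [mul_assoc]
          _ = a := haya
      · calc (x * b) * x = x * b * x := rfl
          _ = x := hxbx
    calc a * (x * (b * (y * (a * x)))) = a * ((x * b) * ((y * a) * x)) := by
          simp only [mul_assoc]
      _ = a * x := h1
  -- xbyax = x
  have hB : x * (b * (y * (a * x))) = x := by
    have := congrArg (fun t => x * t) hA
    calc x * (b * (y * (a * x)))
        = (x * a * x) * (b * (y * (a * x))) := by rw [hxax]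
      _ = x * (a * (x * (b * (y * (a * x))))) := by simp only [mul_assoc]
      _ = x * (a * x) := by rw [hA]
      _ = x * a * x := by rw [mul_assoc]
      _ = x := hxax
  -- xbya = xa
  have hC : x * (b * (y * a)) = x * a := by
    have := congrArg (fun t => t * a) hB
    calc x * (b * (y * a))
        = x * (b * (y * (a * (x * a)))) := by
          have : a * (x * a) = a := by rw [← mul_assoc]; exact haxa
          rw [this]
      _ = (x * (b * (y * (a * x)))) * a := by simp only [mul_assoc]
      _ = x * a := by rw [hB]
  -- xby = xay
  have hD : x * (b * y) = x * (a * y) := by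
    calc x * (b * y) = x * (b * (y * (a * y))) := by
          have : y * (a * y) = y := by rw [← mul_assoc]; exact hyay
          rw [this]
      _ = (x * (b * (y * a))) * y := by simp only [mul_assoc]
      _ = (x * a) * y := by rw [hC]
      _ = x * (a * y) := by rw [mul_assoc]
  -- Step A' : x*a*y*b*x*a = x*a
  have hA' : x * (a * (y * (b * (x * a)))) = x * a := by
    have h1 : x * ((a * y) * ((b * x) * a)) = x * a := by
      refine lemB horth hay_e hbx_e ?_ ?_
      · calc x * (b * x) = x * b * x := by rw [mul_assoc]
          _ = x := hxbx
      · calc (a * y) * a = a * y * a := rfl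
          _ = a := haya
    calc x * (a * (y * (b * (x * a)))) = x * ((a * y) * ((b * x) * a)) := by
          simp only [mul_assoc]
      _ = x * a := h1
  -- aybxa = a
  have hB' : a * (y * (b * (x * a))) = a := by
    calc a * (y * (b * (x * a)))
        = (a * x * a) * (y * (b * (x * a))) := by rw [haxa]
      _ = a * (x * (a * (y * (b * (x * a))))) := by simp only [mul_assoc]
      _ = a * (x * a) := by rw [hA']
      _ = a * x * a := by rw [mul_assoc]
      _ = a := haxa
  -- aybx = ax
  have hC' : a * (y * (b * x)) = a * x := by
    calc a * (y * (b * x))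
        = a * (y * (b * (x * (a * x)))) := by
          have : x * (a * x) = x := by rw [← mul_assoc]; exact hxax
          rw [this]
      _ = (a * (y * (b * (x * a)))) * x := by simp only [mul_assoc]
      _ = a * x := by rw [hB']
  -- ybx = yax
  have hD' : y * (b * x) = y * (a * x) := by
    calc y * (b * x) = y * (a * (y * (b * x))) := by
          have : y * (a * y) = y := by rw [← mul_assoc]; exact hyay
          conv_lhs => rw [← this]
          simp only [mul_assoc]
      _ = y * (a * x) := by rw [hC']
  -- byax = bx
  have hE : b * (y * (a * x)) = b * x := by
    calc b * (y * (a * x))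
        = (b * x * b) * (y * (a * x)) := by rw [hbxb]
      _ = b * (x * (b * (y * (a * x)))) := by simp only [mul_assoc]
      _ = b * x := by rw [hB]
  constructor
  · -- b * y * b = b
    calc b * y * b = b * (y * (b * (x * b))) := by
          have : b * (x * b) = b := by rw [← mul_assoc]; exact hbxb
          rw [this, mul_assoc]
      _ = b * ((y * (b * x)) * b) := by simp only [mul_assoc]
      _ = b * ((y * (a * x)) * b) := by rw [hD']
      _ = (b * (y * (a * x))) * b := by simp only [mul_assoc]
      _ = (b * x) * b := by rw [hE]
      _ = b := hbxb
  · -- y * b * y = y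
    calc y * b * y = y * ((b * (x * b)) * y) := by
          have : b * (x * b) = b := by rw [← mul_assoc]; exact hbxb
          rw [this, mul_assoc]
      _ = (y * (b * x)) * (b * y) := by simp only [mul_assoc]
      _ = (y * (a * x)) * (b * y) := by rw [hD']
      _ = y * (a * (x * (b * y))) := by simp only [mul_assoc]
      _ = y * (a * (x * (a * y))) := by rw [hD]
      _ = (y * (a * (x * a))) * y := by simp only [mul_assoc]
      _ = (y * a) * y := by
          have : a * (x * a) = a := by rw [← mul_assoc]; exact haxa
          rw [this]
      _ = y := hyay

/-- Theorem 2.2, converse part. An orthodox semigroup with exactly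
one permutation matching is an inverse semigroup. -/
theorem stmt_12 (S : Type*) [Semigroup S]
    (hreg : IsRegularSemigroup S)
    (horth : ∀ e f : S, e * e = e → f * f = f → (e * f) * (e * f) = e * f)
    (huniq : ∃! f : S → S, IsPermMatching f) :
    ∀ a : S, ∃! b : S, b ∈ invs a := by
  classical
  obtain ⟨f, hf, hfu⟩ := huniq
  intro a
  refine ⟨f a, hf.2 a, ?_⟩
  intro b hb
  by_contra hne
  obtain ⟨c, hc⟩ := hf.1.2 b
  have hbc : IsInverseOf b c := by
    have := hf.2 c
    rw [hc] at this
    exact this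
  have hfac : IsInverseOf (f a) c := hall horth hb hbc (hf.2 a)
  have hca : c ≠ a := by
    rintro rfl
    exact hne hc.symm
  set g : S → S := f ∘ (Equiv.swap a c) with hg
  have hgmatch : IsPermMatching g := by
    constructor
    · exact hf.1.comp (Equiv.swap a c).bijective
    · intro t
      by_cases hta : t = a
      · subst hta
        show f (Equiv.swap t c t) ∈ invs t
        rw [Equiv.swap_apply_left, hc]
        exact hb
      · by_cases htc : t = c
        · subst htc
          show f (Equiv.swap a t t) ∈ invs t
          rw [Equiv.swap_apply_right]
          exact hfac
        · show f (Equiv.swap a c t) ∈ invs t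
          rw [Equiv.swap_apply_of_ne_of_ne hta htc]
          exact hf.2 t
  have : g = f := hfu g hgmatch
  have hga : g a = f a := by rw [this]
  have : f c = f a := by
    have h1 : g a = f c := by
      show f (Equiv.swap a c a) = f c
      rw [Equiv.swap_apply_left]
    rw [← h1, hga]
  rw [hc] at this
  exact hne this
end

section
/- There exists a semigroup S with exactly 5 elements such that: S is regular; Green's H-relation on S is trivial (a H b implies a = b); S is not an inverse semigroup (some element of S has more than one inverse); and S has exactly one permutation matching. -/
variable {S : Type*}

/-!
The example is `A₂`, the Rees matrix semigroup `M⁰({1}; 2, 2; P)` with sandwich matrix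
`P = [[0, 1], [1, 1]]`. Its nonzero elements are the matrix units `eᵢⱼ`, with
`eᵢⱼ eₖₗ = eᵢₗ` unless `j = k = 0`, when the product is `0`. The inverse sets are
`V(e₀₀) = {e₁₁}`, `V(e₀₁) = {e₀₁, e₁₁}`, `V(e₁₀) = {e₁₀, e₁₁}`, so a permutation matching
must send `e₀₀ ↦ e₁₁`, then by injectivity fix `e₀₁` and `e₁₀`, and so send `e₁₁ ↦ e₀₀`;
this reflection in the anti-diagonal is indeed a matching. The idempotent `e₁₁` has the two
inverses `e₁₁` and `e₀₀`, and `H` is trivial because the structure group is.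
-/

theorem Function.Surjective.eq_of_eqOn_compl_singleton {α β : Type*} {f g : α → β} {a : α}
    (hf : Function.Surjective f) (hg : Function.Injective g) (h : Set.EqOn f g {a}ᶜ) :
    f = g := by
  funext x
  by_cases hx : x = a
  · subst hx
    obtain ⟨y, hy⟩ := hf (g x)
    by_cases hyx : y = x
    · rwa [hyx] at hy
    · exact absurd (hg (hy.symm.trans (h hyx))) (Ne.symm hyx)
  · exact h hx

section Semigroup

variable [Semigroup S]

theorem IsPermMatching.isRegularSemigroup {f : S → S} (hf : IsPermMatching f) :
    IsRegularSemigroup S :=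
  fun a => ⟨f a, hf.2 a⟩

theorem not_forall_existsUnique_invs {a b c : S} (hb : b ∈ invs a) (hc : c ∈ invs a)
    (hbc : b ≠ c) : ¬ ∀ a : S, ∃! b, b ∈ invs a :=
  fun h => hbc ((h a).unique hb hc)

theorem greenL.mem_lSet {a b : S} (h : greenL a b) : b ∈ lSet a :=
  h ▸ Set.mem_insert b _

theorem greenR.mem_rSet {a b : S} (h : greenR a b) : b ∈ rSet a :=
  h ▸ Set.mem_insert b _

end Semigroup

def A2 : Type := Option (Fin 2 × Fin 2)

namespace A2

instance : DecidableEq A2 := inferInstanceAs (DecidableEq (Option (Fin 2 × Fin 2)))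

instance : Fintype A2 := inferInstanceAs (Fintype (Option (Fin 2 × Fin 2)))

instance : Zero A2 := ⟨none⟩

def e (i j : Fin 2) : A2 := some (i, j)

def mul : A2 → A2 → A2
  | some (i, j), some (k, l) => if j = 0 ∧ k = 0 then 0 else e i l
  | _, _ => 0

instance : Semigroup A2 where
  mul := mul
  mul_assoc := by decide

theorem card_eq : Fintype.card A2 = 5 := rfl

theorem mem_invs_iff {a b : A2} : b ∈ invs a ↔ a * b * a = a ∧ b * a * b = b := Iff.rfl

theorem mem_invs_zero {b : A2} : b ∈ invs 0 ↔ b = 0 := by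
  rw [mem_invs_iff]; revert b; decide

theorem mem_invs_e00 {b : A2} : b ∈ invs (e 0 0) ↔ b = e 1 1 := by
  rw [mem_invs_iff]; revert b; decide

theorem mem_invs_e01 {b : A2} : b ∈ invs (e 0 1) ↔ b = e 0 1 ∨ b = e 1 1 := by
  rw [mem_invs_iff]; revert b; decide

theorem mem_invs_e10 {b : A2} : b ∈ invs (e 1 0) ↔ b = e 1 0 ∨ b = e 1 1 := by
  rw [mem_invs_iff]; revert b; decide

theorem e00_mem_invs_e11 : e 0 0 ∈ invs (e 1 1) := mem_invs_iff.2 (by decide)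

theorem e11_mem_invs_e11 : e 1 1 ∈ invs (e 1 1) := mem_invs_iff.2 (by decide)

theorem eq_of_greenH {a b : A2} (h : greenH a b) : a = b := by
  have key : ∀ a b : A2, b ∈ lSet a → a ∈ lSet b → b ∈ rSet a → a ∈ rSet b → a = b := by
    simp only [lSet, rSet, Set.mem_insert_iff]
    decide
  exact key a b h.1.mem_lSet (greenL.mem_lSet h.1.symm) h.2.mem_rSet
    (greenR.mem_rSet h.2.symm)

def antiTranspose : A2 → A2
  | some (i, j) => e j.rev i.rev
  | none => 0

theorem antiTranspose_involutive : Function.Involutive antiTranspose := by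
  unfold Function.Involutive; decide

theorem isPermMatching_antiTranspose : IsPermMatching antiTranspose :=
  ⟨antiTranspose_involutive.bijective, by simp only [mem_invs_iff]; decide⟩

theorem IsPermMatching.eq_antiTranspose {f : A2 → A2} (hf : IsPermMatching f) :
    f = antiTranspose := by
  have h0 : f 0 = 0 := mem_invs_zero.1 (hf.2 0)
  have h00 : f (e 0 0) = e 1 1 := mem_invs_e00.1 (hf.2 _)
  have h01 : f (e 0 1) = e 0 1 := (mem_invs_e01.1 (hf.2 _)).resolve_right fun h =>
    absurd (hf.1.1 (h.trans h00.symm)) (by decide)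
  have h10 : f (e 1 0) = e 1 0 := (mem_invs_e10.1 (hf.2 _)).resolve_right fun h =>
    absurd (hf.1.1 (h.trans h00.symm)) (by decide)
  refine hf.1.2.eq_of_eqOn_compl_singleton antiTranspose_involutive.injective (a := e 1 1) ?_
  have ne_e11 : ∀ x : A2, x ≠ e 1 1 → x = 0 ∨ x = e 0 0 ∨ x = e 0 1 ∨ x = e 1 0 := by decide
  intro x hx
  rcases ne_e11 x hx with rfl | rfl | rfl | rfl
  · exact h0
  · exact h00
  · exact h01
  · exact h10

end A2

/-- Theorem 2.2, example. There is a 5-element regular semigroup with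
trivial H-relation which is not inverse but has exactly one permutation matching. -/
theorem stmt_13 :
    ∃ (S : Type) (inst : Semigroup S) (instF : Fintype S),
      Fintype.card S = 5 ∧
      @IsRegularSemigroup S inst ∧
      (∀ a b : S, @greenH S inst a b → a = b) ∧
      ¬ (∀ a : S, ∃! b : S, b ∈ @invs S inst a) ∧
      (∃! f : S → S, @IsPermMatching S inst f) :=
  ⟨A2, inferInstance, inferInstance, A2.card_eq,
    A2.isPermMatching_antiTranspose.isRegularSemigroup,
    fun _ _ => A2.eq_of_greenH,
    not_forall_existsUnique_invs A2.e11_mem_invs_e11 A2.e00_mem_invs_e11 (by decide),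
    ⟨_, A2.isPermMatching_antiTranspose, fun _ => A2.IsPermMatching.eq_antiTranspose⟩⟩
end

section
/- Let S be an orthodox semigroup. Then S has a permutation matching if and only if for every a ∈ S there is a bijection between V(a) and V(V(a)) (i.e. |V(V(a))| = |V(a)| for all a ∈ S). Moreover, if an orthodox semigroup S has a permutation matching, then S has an involution matching. -/
variable {S : Type*}

section KeyLemma
variable [Semigroup S]

theorem key_lemma (horth : ∀ e f : S, e * e = e → f * f = f → (e * f) * (e * f) = e * f)
    {a b x y : S} (hxa : IsInverseOf x a) (hxb : IsInverseOf x b)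
    (hya : IsInverseOf y a) : IsInverseOf y b := by
  obtain ⟨hxa1, hxa2⟩ := hxa
  obtain ⟨hxb1, hxb2⟩ := hxb
  obtain ⟨hya1, hya2⟩ := hya
  -- plain right-assoc forms
  have hxa1P : a * (x * a) = a := by rw [← mul_assoc, hxa1]
  have hxa2P : x * (a * x) = x := by rw [← mul_assoc, hxa2]
  have hxb1P : b * (x * b) = b := by rw [← mul_assoc, hxb1]
  have hxb2P : x * (b * x) = x := by rw [← mul_assoc, hxb2]
  have hya1P : a * (y * a) = a := by rw [← mul_assoc, hya1]
  have hya2P : y * (a * y) = y := by rw [← mul_assoc, hya2]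
  -- continuation forms
  have hxa1c : ∀ t : S, a * (x * (a * t)) = a * t := fun t => by
    rw [← mul_assoc, ← mul_assoc, hxa1]
  have hxa2c : ∀ t : S, x * (a * (x * t)) = x * t := fun t => by
    rw [← mul_assoc, ← mul_assoc, hxa2]
  have hxb1c : ∀ t : S, b * (x * (b * t)) = b * t := fun t => by
    rw [← mul_assoc, ← mul_assoc, hxb1]
  have hxb2c : ∀ t : S, x * (b * (x * t)) = x * t := fun t => by
    rw [← mul_assoc, ← mul_assoc, hxb2]
  have hya1c : ∀ t : S, a * (y * (a * t)) = a * t := fun t => by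
    rw [← mul_assoc, ← mul_assoc, hya1]
  have hya2c : ∀ t : S, y * (a * (y * t)) = y * t := fun t => by
    rw [← mul_assoc, ← mul_assoc, hya2]
  -- idempotents
  have iay : (a * y) * (a * y) = a * y := by
    rw [mul_assoc a y (a * y), ← mul_assoc y a y, hya2]
  have iya : (y * a) * (y * a) = y * a := by
    rw [mul_assoc y a (y * a), ← mul_assoc a y a, hya1]
  have ibx : (b * x) * (b * x) = b * x := by
    rw [mul_assoc b x (b * x), ← mul_assoc x b x, hxb2]
  have ixb : (x * b) * (x * b) = x * b := by
    rw [mul_assoc x b (x * b), ← mul_assoc b x b, hxb1]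
  -- horth instances
  have hA := horth (a * y) (b * x) iay ibx
  have hA' := horth (b * x) (a * y) ibx iay
  have hB := horth (x * b) (y * a) ixb iya
  have hB' := horth (y * a) (x * b) iya ixb
  have hAc : ∀ t : S, a * (y * (b * (x * (a * (y * (b * (x * t))))))) = a * (y * (b * (x * t))) :=
    fun t => by simpa only [mul_assoc] using congrArg (· * t) hA
  have hA'c : ∀ t : S, b * (x * (a * (y * (b * (x * (a * (y * t))))))) = b * (x * (a * (y * t))) :=
    fun t => by simpa only [mul_assoc] using congrArg (· * t) hA'
  have hBc : ∀ t : S, x * (b * (y * (a * (x * (b * (y * (a * t))))))) = x * (b * (y * (a * t))) :=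
    fun t => by simpa only [mul_assoc] using congrArg (· * t) hB
  have hB'c : ∀ t : S, y * (a * (x * (b * (y * (a * (x * (b * t))))))) = y * (a * (x * (b * t))) :=
    fun t => by simpa only [mul_assoc] using congrArg (· * t) hB'
  -- Chain A
  have stA1 : y * (b * (x * (a * (y * b)))) = y * b := by
    have e1 : y * (a * (y * (b * (x * (a * (y * (b * (x * b)))))))) = y * b := by
      rw [hAc b, hya2c (b * (x * b)), hxb1P]
    have e2 : y * (a * (y * (b * (x * (a * (y * (b * (x * b)))))))) =
        y * (b * (x * (a * (y * b)))) := by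
      rw [hxb1P, hya2c (b * (x * (a * (y * b))))]
    exact e2.symm.trans e1
  have stA1c : ∀ t : S, y * (b * (x * (a * (y * (b * t))))) = y * (b * t) :=
    fun t => by simpa only [mul_assoc] using congrArg (· * t) stA1
  have hQ : x * (a * (y * (b * (x * a)))) = x * a := by
    have e1 : x * (b * (x * (a * (y * (b * (x * (a * (y * a)))))))) = x * a := by
      rw [hA'c a, hya1P, hxb2c a]
    have e2 : x * (b * (x * (a * (y * (b * (x * (a * (y * a)))))))) =
        x * (a * (y * (b * (x * a)))) := by
      rw [hxb2c (a * (y * (b * (x * (a * (y * a)))))), hya1P]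
    exact e2.symm.trans e1
  have hQc : ∀ t : S, x * (a * (y * (b * (x * (a * t))))) = x * (a * t) :=
    fun t => by simpa only [mul_assoc] using congrArg (· * t) hQ
  have iwq : ((y * b) * (x * a)) * ((y * b) * (x * a)) = (y * b) * (x * a) := by
    simp only [mul_assoc]; rw [stA1c (x * a)]
  have iqw : ((x * a) * (y * b)) * ((x * a) * (y * b)) = (x * a) * (y * b) := by
    simp only [mul_assoc]; rw [hQc (y * b)]
  have hW := horth ((y * b) * (x * a)) ((x * a) * (y * b)) iwq iqw
  simp only [mul_assoc] at hW
  -- hW : y*(b*(x*(a*(x*(a*(y*(b*(y*(b*(x*(a*(x*(a*(y*b)))))))))))))) = y*(b*(x*(a*(x*(a*(y*b))))))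
  rw [hxa2c (a * (y * b))] at hW
  rw [stA1] at hW
  rw [hxa2c (a * (y * (b * (y * b))))] at hW
  rw [stA1c (y * b)] at hW
  -- hW : y * (b * (y * b)) = y * b
  have A3 : y * (b * (y * b)) = y * b := hW
  have A4 : x * b = x * (a * (y * b)) := by
    have e := hQc (x * b)
    rw [hxa2c b, hxb1P] at e
    exact e.symm
  have A4c : ∀ t : S, x * (b * t) = x * (a * (y * (b * t))) :=
    fun t => by simpa only [mul_assoc] using congrArg (· * t) A4
  have A5 : x * (b * (y * b)) = x * b := by
    rw [A4c (y * b), A3, ← A4]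
  have A6 : b * (y * b) = b := by
    have e : b * (x * (b * (y * b))) = b * (y * b) := hxb1c (y * b)
    rw [A5, hxb1P] at e
    exact e.symm
  -- Chain B
  have B1 : b * (y * (a * (x * (b * y)))) = b * y := by
    have e1 : b * (x * (b * (y * (a * (x * (b * (y * (a * y)))))))) = b * y := by
      rw [hBc y, hya2P]; exact hxb1c y
    have e2 : b * (x * (b * (y * (a * (x * (b * (y * (a * y)))))))) =
        b * (y * (a * (x * (b * y)))) := by
      rw [hxb1c (y * (a * (x * (b * (y * (a * y)))))), hya2P]
    exact e2.symm.trans e1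
  have B1c : ∀ t : S, b * (y * (a * (x * (b * (y * t))))) = b * (y * t) :=
    fun t => by simpa only [mul_assoc] using congrArg (· * t) B1
  have B2 : a * (x * (b * (y * (a * x)))) = a * x := by
    have e1 : a * (y * (a * (x * (b * (y * (a * (x * (b * x)))))))) = a * x := by
      rw [hB'c x, hxb2P]; exact hya1c x
    have e2 : a * (y * (a * (x * (b * (y * (a * (x * (b * x)))))))) =
        a * (x * (b * (y * (a * x)))) := by
      rw [hya1c (x * (b * (y * (a * (x * (b * x)))))), hxb2P]
    exact e2.symm.trans e1
  have B2c : ∀ t : S, a * (x * (b * (y * (a * (x * t))))) = a * (x * t) :=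
    fun t => by simpa only [mul_assoc] using congrArg (· * t) B2
  have ivp : ((b * y) * (a * x)) * ((b * y) * (a * x)) = (b * y) * (a * x) := by
    simp only [mul_assoc]; rw [B1c (a * x)]
  have ipv : ((a * x) * (b * y)) * ((a * x) * (b * y)) = (a * x) * (b * y) := by
    simp only [mul_assoc]; rw [B2c (b * y)]
  have hV := horth ((b * y) * (a * x)) ((a * x) * (b * y)) ivp ipv
  simp only [mul_assoc] at hV
  rw [hxa1c (x * (b * y))] at hV
  rw [B1] at hV
  rw [hxa1c (x * (b * (y * (b * y))))] at hV
  rw [B1c (b * y)] at hV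
  have B3 : b * (y * (b * y)) = b * y := hV
  have B4 : a * y = a * (x * (b * y)) := by
    have e := B2c (a * y)
    rw [hxa1c y, hya2P] at e
    exact e.symm
  have B4c : ∀ t : S, a * (y * t) = a * (x * (b * (y * t))) :=
    fun t => by simpa only [mul_assoc] using congrArg (· * t) B4
  have B5 : a * (y * (b * y)) = a * y := by
    rw [B4c (b * y), B3, ← B4]
  have B6 : y * (b * y) = y := by
    have e := hya2c (b * y)
    rw [B5, hya2P] at e
    exact e.symm
  constructor
  · show b * y * b = b
    rw [mul_assoc]; exact A6
  · show y * b * y = y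
    rw [mul_assoc]; exact B6

end KeyLemma

section Gamma
variable [Semigroup S]

lemma inv_symm {a b : S} (h : b ∈ invs a) : a ∈ invs b := ⟨h.2, h.1⟩

def gammaSetoid (S : Type*) [Semigroup S] : Setoid S :=
  ⟨fun a b => invs a = invs b, ⟨fun _ => rfl, Eq.symm, Eq.trans⟩⟩

variable (hreg : IsRegularSemigroup S)
  (horth : ∀ e f : S, e * e = e → f * f = f → (e * f) * (e * f) = e * f)

include horth in

lemma invs_eq_invs {a c c' : S} (hc : c ∈ invs a) (hc' : c' ∈ invs a) : invs c = invs c' :=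
  Set.ext fun z =>
    ⟨fun hz => key_lemma horth (inv_symm hc) (inv_symm hc') hz,
     fun hz => key_lemma horth (inv_symm hc') (inv_symm hc) hz⟩

noncomputable def phi (hreg : IsRegularSemigroup S)
    (horth : ∀ e f : S, e * e = e → f * f = f → (e * f) * (e * f) = e * f) : Quotient (gammaSetoid S) → Quotient (gammaSetoid S) :=
  Quotient.lift (fun a => Quotient.mk (gammaSetoid S) (hreg a).choose)
    (fun a b h => Quotient.sound (invs_eq_invs horth (hreg a).choose_spec
      (show (hreg b).choose ∈ invs a from h ▸ (hreg b).choose_spec)))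

lemma phi_mk {a c : S} (hc : c ∈ invs a) :
    phi hreg horth (Quotient.mk (gammaSetoid S) a) = Quotient.mk (gammaSetoid S) c :=
  Quotient.sound (invs_eq_invs horth (hreg a).choose_spec hc)

lemma mem_invs_iff_s14 {a c : S} :
    c ∈ invs a ↔ phi hreg horth (Quotient.mk (gammaSetoid S) a) = Quotient.mk (gammaSetoid S) c := by
  constructor
  · exact phi_mk hreg horth
  · intro h
    have h' : invs (hreg a).choose = invs c := Quotient.exact h
    have : a ∈ invs c := h' ▸ inv_symm (hreg a).choose_spec
    exact inv_symm this

lemma phi_phi (q : Quotient (gammaSetoid S)) : phi hreg horth (phi hreg horth q) = q := by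
  induction q using Quotient.ind with
  | _ a =>
    have h1 : phi hreg horth (Quotient.mk (gammaSetoid S) a)
        = Quotient.mk (gammaSetoid S) (hreg a).choose := rfl
    rw [h1]
    exact phi_mk hreg horth (inv_symm (hreg a).choose_spec)

include hreg horth in
lemma invsSet_eq (a : S) :
    invsSet (invs a) = {c | Quotient.mk (gammaSetoid S) c = Quotient.mk (gammaSetoid S) a} := by
  ext c
  simp only [invsSet, Set.mem_iUnion, Set.mem_setOf_eq, exists_prop]
  constructor
  · rintro ⟨b, hb, hcb⟩
    exact Quotient.sound (invs_eq_invs horth hcb (inv_symm hb))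
  · intro h
    have h' : invs c = invs a := Quotient.exact h
    obtain ⟨b, hb⟩ := hreg c
    exact ⟨b, h' ▸ (hb : b ∈ invs c), inv_symm hb⟩

lemma invs_eq_fib (a : S) :
    invs a = {c | Quotient.mk (gammaSetoid S) c
      = phi hreg horth (Quotient.mk (gammaSetoid S) a)} := by
  ext c
  rw [Set.mem_setOf_eq, mem_invs_iff_s14 hreg horth, eq_comm]

end Gamma

section Matching
variable [Semigroup S]
variable (hreg : IsRegularSemigroup S)
  (horth : ∀ e f : S, e * e = e → f * f = f → (e * f) * (e * f) = e * f)

/-- fiber of the gamma quotient map -/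
def fib (q : Quotient (gammaSetoid S)) : Set S := {s | Quotient.mk (gammaSetoid S) s = q}

variable (g : ∀ q : Quotient (gammaSetoid S), fib q ≃ fib (phi hreg horth q))

open Classical in
noncomputable def Gfun (q : Quotient (gammaSetoid S)) : S → S := fun s =>
  if hs : Quotient.mk (gammaSetoid S) s = q then (g q ⟨s, hs⟩).1 else s

open Classical in
noncomputable def G'fun (q : Quotient (gammaSetoid S)) : S → S := fun s =>
  if hs : Quotient.mk (gammaSetoid S) s = phi hreg horth q then ((g q).symm ⟨s, hs⟩).1 else s

lemma G_eq {q : Quotient (gammaSetoid S)} {s : S} (hs : Quotient.mk (gammaSetoid S) s = q) :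
    Gfun hreg horth g q s = (g q ⟨s, hs⟩).1 := dif_pos hs

lemma G'_eq {q : Quotient (gammaSetoid S)} {s : S}
    (hs : Quotient.mk (gammaSetoid S) s = phi hreg horth q) :
    G'fun hreg horth g q s = ((g q).symm ⟨s, hs⟩).1 := dif_pos hs

lemma G_mk {q : Quotient (gammaSetoid S)} {s : S} (hs : Quotient.mk (gammaSetoid S) s = q) :
    Quotient.mk (gammaSetoid S) (Gfun hreg horth g q s) = phi hreg horth q := by
  rw [G_eq hreg horth g hs]; exact (g q ⟨s, hs⟩).2

lemma G'_mk {q : Quotient (gammaSetoid S)} {s : S}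
    (hs : Quotient.mk (gammaSetoid S) s = phi hreg horth q) :
    Quotient.mk (gammaSetoid S) (G'fun hreg horth g q s) = q := by
  rw [G'_eq hreg horth g hs]; exact ((g q).symm ⟨s, hs⟩).2

lemma G'_G {q : Quotient (gammaSetoid S)} {s : S} (hs : Quotient.mk (gammaSetoid S) s = q) :
    G'fun hreg horth g q (Gfun hreg horth g q s) = s := by
  rw [G_eq hreg horth g hs, G'_eq hreg horth g (g q ⟨s, hs⟩).2]
  have h2 : (⟨(g q ⟨s, hs⟩).1, (g q ⟨s, hs⟩).2⟩ : fib (phi hreg horth q)) = g q ⟨s, hs⟩ := rfl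
  rw [h2, Equiv.symm_apply_apply]

lemma G_G' {q : Quotient (gammaSetoid S)} {s : S}
    (hs : Quotient.mk (gammaSetoid S) s = phi hreg horth q) :
    Gfun hreg horth g q (G'fun hreg horth g q s) = s := by
  rw [G'_eq hreg horth g hs, G_eq hreg horth g ((g q).symm ⟨s, hs⟩).2]
  have h2 : (⟨((g q).symm ⟨s, hs⟩).1, ((g q).symm ⟨s, hs⟩).2⟩ : fib q) = (g q).symm ⟨s, hs⟩ := rfl
  rw [h2, Equiv.apply_symm_apply]

def orbSetoid : Setoid (Quotient (gammaSetoid S)) where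
  r p r' := p = r' ∨ p = phi hreg horth r'
  iseqv := by
    refine ⟨fun _ => Or.inl rfl, ?_, ?_⟩
    · rintro p r (rfl | rfl)
      · exact Or.inl rfl
      · exact Or.inr (phi_phi hreg horth r).symm
    · rintro p r t (rfl | rfl) (rfl | rfl)
      · exact Or.inl rfl
      · exact Or.inr rfl
      · exact Or.inr rfl
      · exact Or.inl (phi_phi hreg horth t)

noncomputable def pick (q : Quotient (gammaSetoid S)) : Quotient (gammaSetoid S) :=
  (Quotient.mk (orbSetoid hreg horth) q).out

lemma pick_spec (q : Quotient (gammaSetoid S)) :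
    pick hreg horth q = q ∨ pick hreg horth q = phi hreg horth q :=
  Quotient.exact ((Quotient.mk (orbSetoid hreg horth) q).out_eq)

lemma pick_phi (q : Quotient (gammaSetoid S)) :
    pick hreg horth (phi hreg horth q) = pick hreg horth q :=
  congrArg Quotient.out (Quotient.sound (Or.inr rfl))

open Classical in
noncomputable def bigF : S → S := fun s =>
  if phi hreg horth (Quotient.mk (gammaSetoid S) s) = Quotient.mk (gammaSetoid S) s then s
  else if pick hreg horth (Quotient.mk (gammaSetoid S) s) = Quotient.mk (gammaSetoid S) s then
    Gfun hreg horth g (Quotient.mk (gammaSetoid S) s) s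
  else G'fun hreg horth g (phi hreg horth (Quotient.mk (gammaSetoid S) s)) s

lemma bigF_mk (s : S) :
    Quotient.mk (gammaSetoid S) (bigF hreg horth g s)
      = phi hreg horth (Quotient.mk (gammaSetoid S) s) := by
  unfold bigF
  split_ifs with h1 h2
  · exact h1.symm
  · exact G_mk hreg horth g rfl
  · exact G'_mk hreg horth g (phi_phi hreg horth _).symm

lemma bigF_invol (s : S) : bigF hreg horth g (bigF hreg horth g s) = s := by
  by_cases h1 : phi hreg horth (Quotient.mk (gammaSetoid S) s) = Quotient.mk (gammaSetoid S) s
  · have e : bigF hreg horth g s = s := by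
      unfold bigF; rw [if_pos h1]
    rw [e, e]
  · by_cases h2 : pick hreg horth (Quotient.mk (gammaSetoid S) s) = Quotient.mk (gammaSetoid S) s
    · have e : bigF hreg horth g s = Gfun hreg horth g (Quotient.mk (gammaSetoid S) s) s := by
        unfold bigF; rw [if_neg h1, if_pos h2]
      have ht : Quotient.mk (gammaSetoid S) (Gfun hreg horth g (Quotient.mk (gammaSetoid S) s) s)
          = phi hreg horth (Quotient.mk (gammaSetoid S) s) := G_mk hreg horth g rfl
      have h1t : ¬ (phi hreg horth (Quotient.mk (gammaSetoid S)
            (Gfun hreg horth g (Quotient.mk (gammaSetoid S) s) s))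
          = Quotient.mk (gammaSetoid S) (Gfun hreg horth g (Quotient.mk (gammaSetoid S) s) s)) := by
        rw [ht, phi_phi]
        exact fun e' => h1 e'.symm
      have h2t : ¬ (pick hreg horth (Quotient.mk (gammaSetoid S)
            (Gfun hreg horth g (Quotient.mk (gammaSetoid S) s) s))
          = Quotient.mk (gammaSetoid S) (Gfun hreg horth g (Quotient.mk (gammaSetoid S) s) s)) := by
        rw [ht, pick_phi, h2]
        exact fun e' => h1 e'.symm
      rw [e]
      have e2 : bigF hreg horth g (Gfun hreg horth g (Quotient.mk (gammaSetoid S) s) s)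
          = G'fun hreg horth g (phi hreg horth (Quotient.mk (gammaSetoid S)
              (Gfun hreg horth g (Quotient.mk (gammaSetoid S) s) s)))
            (Gfun hreg horth g (Quotient.mk (gammaSetoid S) s) s) := by
        unfold bigF; rw [if_neg h1t, if_neg h2t]
      rw [e2, ht, phi_phi]
      exact G'_G hreg horth g rfl
    · have h3 : pick hreg horth (Quotient.mk (gammaSetoid S) s)
          = phi hreg horth (Quotient.mk (gammaSetoid S) s) :=
        (pick_spec hreg horth _).resolve_left h2
      have e : bigF hreg horth g s
          = G'fun hreg horth g (phi hreg horth (Quotient.mk (gammaSetoid S) s)) s := by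
        unfold bigF; rw [if_neg h1, if_neg h2]
      have ht : Quotient.mk (gammaSetoid S)
            (G'fun hreg horth g (phi hreg horth (Quotient.mk (gammaSetoid S) s)) s)
          = phi hreg horth (Quotient.mk (gammaSetoid S) s) :=
        G'_mk hreg horth g (phi_phi hreg horth _).symm
      have h1t : ¬ (phi hreg horth (Quotient.mk (gammaSetoid S)
            (G'fun hreg horth g (phi hreg horth (Quotient.mk (gammaSetoid S) s)) s))
          = Quotient.mk (gammaSetoid S)
            (G'fun hreg horth g (phi hreg horth (Quotient.mk (gammaSetoid S) s)) s)) := by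
        rw [ht, phi_phi]
        exact fun e' => h1 e'.symm
      have h2t : pick hreg horth (Quotient.mk (gammaSetoid S)
            (G'fun hreg horth g (phi hreg horth (Quotient.mk (gammaSetoid S) s)) s))
          = Quotient.mk (gammaSetoid S)
            (G'fun hreg horth g (phi hreg horth (Quotient.mk (gammaSetoid S) s)) s) := by
        rw [ht, pick_phi, h3]
      rw [e]
      have e2 : bigF hreg horth g
            (G'fun hreg horth g (phi hreg horth (Quotient.mk (gammaSetoid S) s)) s)
          = Gfun hreg horth g (Quotient.mk (gammaSetoid S)
              (G'fun hreg horth g (phi hreg horth (Quotient.mk (gammaSetoid S) s)) s))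
            (G'fun hreg horth g (phi hreg horth (Quotient.mk (gammaSetoid S) s)) s) := by
        unfold bigF; rw [if_neg h1t, if_pos h2t]
      rw [e2, ht]
      exact G_G' hreg horth g (phi_phi hreg horth _).symm

end Matching

section Final
variable [Semigroup S]
variable (hreg : IsRegularSemigroup S)
  (horth : ∀ e f : S, e * e = e → f * f = f → (e * f) * (e * f) = e * f)

include horth in
lemma fwd {f : S → S} (hf : IsPermMatching f) (a : S) :
    Nonempty ((invs a) ≃ (invsSet (invs a))) := by
  refine ⟨Equiv.ofBijective (fun b => ⟨f b.1, ?_⟩) ⟨?_, ?_⟩⟩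
  · exact Set.mem_biUnion b.2 (hf.2 b.1)
  · intro b b' h
    exact Subtype.ext (hf.1.1 (congrArg Subtype.val h))
  · rintro ⟨c, hc⟩
    simp only [invsSet, Set.mem_iUnion, exists_prop] at hc
    obtain ⟨b, hb, hcb⟩ := hc
    obtain ⟨z, rfl⟩ := hf.1.2 c
    have hz : z ∈ invs a := inv_symm (key_lemma horth hcb (hf.2 z) (inv_symm hb))
    exact ⟨⟨z, hz⟩, rfl⟩

include hreg horth in
lemma main (hcond : ∀ a : S, Nonempty ((invs a) ≃ (invsSet (invs a)))) :
    ∃ f : S → S, IsPermMatching f ∧ ∀ a : S, f (f a) = a := by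
  have hg : ∀ q : Quotient (gammaSetoid S), Nonempty (fib q ≃ fib (phi hreg horth q)) := by
    intro q
    induction q using Quotient.ind with
    | _ a =>
      obtain ⟨e⟩ := hcond a
      refine ⟨((Equiv.setCongr (invsSet_eq hreg horth a)).symm.trans e.symm).trans
        (Equiv.setCongr (invs_eq_fib hreg horth a))⟩
  have g : ∀ q : Quotient (gammaSetoid S), fib q ≃ fib (phi hreg horth q) :=
    fun q => (hg q).some
  refine ⟨bigF hreg horth g, ⟨?_, ?_⟩, bigF_invol hreg horth g⟩
  · exact Function.Involutive.bijective (bigF_invol hreg horth g)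
  · intro s
    rw [mem_invs_iff_s14 hreg horth]
    exact (bigF_mk hreg horth g s).symm

end Final

/-- Theorem 3.1. An orthodox semigroup has a permutation matching iff
`|V(V(a))| = |V(a)|` (a bijection between `V(a)` and `V(V(a))` exists) for all `a`;
moreover any orthodox semigroup with a permutation matching has an involution matching. -/
theorem stmt_14 (S : Type*) [Semigroup S]
    (hreg : IsRegularSemigroup S)
    (horth : ∀ e f : S, e * e = e → f * f = f → (e * f) * (e * f) = e * f) :
    ((∃ f : S → S, IsPermMatching f) ↔
      ∀ a : S, Nonempty ((invs a) ≃ (invsSet (invs a)))) ∧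
    ((∃ f : S → S, IsPermMatching f) →
      ∃ f : S → S, IsPermMatching f ∧ ∀ a : S, f (f a) = a) := by
  constructor
  · constructor
    · rintro ⟨f, hf⟩ a
      exact fwd horth hf a
    · intro hcond
      obtain ⟨f, hf, _⟩ := main hreg horth hcond
      exact ⟨f, hf⟩
  · rintro ⟨f, hf⟩
    exact main hreg horth (fun a => fwd horth hf a)
end

section
/- Let S be a finite orthodox 0-rectangular band and let a ∈ S be nonzero. Then the R-class of a meets V(e) for exactly one of the sets V(e) with e a nonzero idempotent: there exists a nonzero idempotent e with R_a ∩ V(e) ≠ ∅, and for any nonzero idempotents e, f, if R_a ∩ V(e) ≠ ∅ and R_a ∩ V(f) ≠ ∅ then V(e) = V(f). The same statement holds with the L-class L_a in place of R_a. -/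
variable {S : Type*}

section MyAux

variable [Semigroup S]

lemma my_spow_succ' (u : S) (n : ℕ) : spow u (n+1) = u * spow u n := by
  induction n with
  | zero => rfl
  | succ n ih =>
    show spow u (n+1) * u = u * (spow u n * u)
    rw [ih, mul_assoc]

lemma my_spow_add (u : S) (a b : ℕ) : spow u a * spow u b = spow u (a + b + 1) := by
  induction b with
  | zero => rfl
  | succ b ih =>
    show spow u a * (spow u b * u) = spow u (a + b + 1) * u
    rw [← mul_assoc, ih]

lemma my_exists_idem_spow [Fintype S] (u : S) :
    ∃ n, spow u n * spow u n = spow u n := by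
  obtain ⟨i, j, hne, hij⟩ := Finite.exists_ne_map_eq_of_infinite (spow u)
  wlog hlt : i < j generalizing i j
  · exact this j i hne.symm hij.symm (by omega)
  have hshift : ∀ t, spow u (i + t) = spow u (j + t) := by
    intro t
    induction t with
    | zero => simpa using hij
    | succ t ih =>
      have h1 : i + (t+1) = (i + t) + 1 := by omega
      have h2 : j + (t+1) = (j + t) + 1 := by omega
      rw [h1, h2]
      show spow u (i+t) * u = spow u (j+t) * u
      rw [ih]
  have hper : ∀ k m, i ≤ m → spow u (m + k * (j - i)) = spow u m := by
    intro k
    induction k with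
    | zero => intro m _; simp
    | succ k ih =>
      intro m hm
      have h1 : m + (k+1) * (j - i) = (m + (j - i)) + k * (j - i) := by ring
      rw [h1, ih _ (by omega)]
      have h2 : m + (j - i) = j + (m - i) := by omega
      have h3 : m = i + (m - i) := by omega
      rw [h2, ← hshift]
      rw [← h3]
  obtain ⟨D, hD⟩ : ∃ D, D = (i+1) * (j - i) := ⟨_, rfl⟩
  have hD1 : i + 1 ≤ D := by
    rw [hD]
    calc i + 1 = (i+1) * 1 := by omega
    _ ≤ (i+1) * (j - i) := Nat.mul_le_mul_left _ (by omega)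
  set N := D - 1 with hN
  have hNi : i ≤ N := by omega
  have hmain := hper (i+1) N hNi
  rw [← hD] at hmain
  have hidx : N + N + 1 = N + D := by omega
  refine ⟨N, ?_⟩
  rw [my_spow_add, hidx, hmain]

lemma my_absorb_key {x s u : S} (hx : x = s * x * u) :
    ∀ n, x = spow s n * x * spow u n := by
  intro n
  induction n with
  | zero => exact hx
  | succ n ih =>
    calc x = s * x * u := hx
    _ = s * (spow s n * x * spow u n) * u := by rw [← ih]
    _ = (s * spow s n) * x * (spow u n * u) := by simp only [mul_assoc]
    _ = spow s (n+1) * x * spow u (n+1) := by rw [← my_spow_succ' s n]; rfl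

lemma my_absorb_right [Fintype S] {x s u : S} (hx : x = s * x * u) :
    ∃ n, x * spow u n = x := by
  obtain ⟨n, hn⟩ := my_exists_idem_spow u
  refine ⟨n, ?_⟩
  conv_lhs => rw [my_absorb_key hx n]
  calc spow s n * x * spow u n * spow u n
      = spow s n * x * (spow u n * spow u n) := by rw [mul_assoc]
    _ = spow s n * x * spow u n := by rw [hn]
    _ = x := (my_absorb_key hx n).symm

lemma my_absorb_left [Fintype S] {x s u : S} (hx : x = u * x * s) :
    ∃ n, spow u n * x = x := by
  obtain ⟨n, hn⟩ := my_exists_idem_spow u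
  refine ⟨n, ?_⟩
  conv_lhs => rw [my_absorb_key hx n]
  calc spow u n * (spow u n * x * spow s n)
      = (spow u n * spow u n) * x * spow s n := by simp only [mul_assoc]
    _ = spow u n * x * spow s n := by rw [hn]
    _ = x := (my_absorb_key hx n).symm

lemma my_ideal_cases {z : S}
    (h0 : ∀ I : Set S, I.Nonempty → (∀ a ∈ I, ∀ s : S, s * a ∈ I ∧ a * s ∈ I) →
      I = {z} ∨ I = Set.univ)
    {c : S} (hc : c ≠ z) (x : S) :
    x = c ∨ (∃ s, x = s * c) ∨ (∃ t, x = c * t) ∨ (∃ s t, x = s * c * t) := by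
  set I : Set S :=
    {x | x = c ∨ (∃ s, x = s * c) ∨ (∃ t, x = c * t) ∨ (∃ s t, x = s * c * t)} with hI
  have hcI : c ∈ I := Or.inl rfl
  have hclosed : ∀ a ∈ I, ∀ s : S, s * a ∈ I ∧ a * s ∈ I := by
    intro a ha s
    rcases ha with rfl | ⟨u, rfl⟩ | ⟨t, rfl⟩ | ⟨u, t, rfl⟩
    · exact ⟨Or.inr (Or.inl ⟨s, rfl⟩), Or.inr (Or.inr (Or.inl ⟨s, rfl⟩))⟩
    · exact ⟨Or.inr (Or.inl ⟨s * u, (mul_assoc s u c).symm⟩),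
        Or.inr (Or.inr (Or.inr ⟨u, s, rfl⟩))⟩
    · exact ⟨Or.inr (Or.inr (Or.inr ⟨s, t, (mul_assoc s c t).symm⟩)),
        Or.inr (Or.inr (Or.inl ⟨t * s, (mul_assoc c t s)⟩))⟩
    · exact ⟨Or.inr (Or.inr (Or.inr ⟨s * u, t, by simp only [mul_assoc]⟩)),
        Or.inr (Or.inr (Or.inr ⟨u, t * s, by simp only [mul_assoc]⟩))⟩
  rcases h0 I ⟨c, hcI⟩ hclosed with h | h
  · exact absurd (by rw [h] at hcI; exact hcI) hc
  · have : x ∈ I := by rw [h]; trivial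
    exact this

lemma my_greenR_mul [Fintype S] {z : S} (hz : ∀ x : S, z * x = z ∧ x * z = z)
    (h0 : ∀ I : Set S, I.Nonempty → (∀ a ∈ I, ∀ s : S, s * a ∈ I ∧ a * s ∈ I) →
      I = {z} ∨ I = Set.univ)
    {x y : S} (hxy : x * y ≠ z) : greenR x (x * y) := by
  have hx : x = x * y ∨ ∃ t, x = (x * y) * t := by
    rcases my_ideal_cases h0 hxy x with h | ⟨s, h⟩ | ⟨t, h⟩ | ⟨s, t, h⟩
    · exact Or.inl h
    · have h' : x = s * x * y := by rw [mul_assoc]; exact h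
      obtain ⟨n, hn⟩ := my_absorb_right h'
      cases n with
      | zero => exact Or.inl hn.symm
      | succ n =>
        refine Or.inr ⟨spow y n, ?_⟩
        have : (x * y) * spow y n = x := by
          rw [mul_assoc, ← my_spow_succ']; exact hn
        exact this.symm
    · exact Or.inr ⟨t, h⟩
    · have h' : x = s * x * (y * t) := by
        calc x = s * (x * y) * t := h
        _ = s * x * (y * t) := by simp only [mul_assoc]
      obtain ⟨n, hn⟩ := my_absorb_right h'
      cases n with
      | zero =>
        refine Or.inr ⟨t, ?_⟩
        have : (x * y) * t = x := by rw [mul_assoc]; exact hn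
        exact this.symm
      | succ n =>
        refine Or.inr ⟨t * spow (y * t) n, ?_⟩
        have : (x * y) * (t * spow (y * t) n) = x := by
          have h2 : (x * y) * (t * spow (y * t) n) = x * spow (y * t) (n+1) := by
            rw [my_spow_succ']; simp only [mul_assoc]
          rw [h2]; exact hn
        exact this.symm
  show rSet x = rSet (x * y)
  ext w
  simp only [rSet, Set.mem_insert_iff, Set.mem_setOf_eq]
  constructor
  · rintro (rfl | ⟨s, rfl⟩)
    · rcases hx with h | ⟨t, h⟩
      · exact Or.inl h
      · exact Or.inr ⟨t, h.symm⟩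
    · rcases hx with h | ⟨t, h⟩
      · exact Or.inr ⟨s, by rw [← h]⟩
      · exact Or.inr ⟨t * s, by rw [← mul_assoc, ← h]⟩
  · rintro (rfl | ⟨s, rfl⟩)
    · exact Or.inr ⟨y, rfl⟩
    · exact Or.inr ⟨y * s, by rw [mul_assoc]⟩

lemma my_greenL_mul [Fintype S] {z : S} (hz : ∀ x : S, z * x = z ∧ x * z = z)
    (h0 : ∀ I : Set S, I.Nonempty → (∀ a ∈ I, ∀ s : S, s * a ∈ I ∧ a * s ∈ I) →
      I = {z} ∨ I = Set.univ)
    {x y : S} (hyx : y * x ≠ z) : greenL x (y * x) := by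
  have hx : x = y * x ∨ ∃ s, x = s * (y * x) := by
    rcases my_ideal_cases h0 hyx x with h | ⟨s, h⟩ | ⟨t, h⟩ | ⟨s, t, h⟩
    · exact Or.inl h
    · exact Or.inr ⟨s, h⟩
    · have h' : x = y * x * t := h
      obtain ⟨n, hn⟩ := my_absorb_left h'
      cases n with
      | zero => exact Or.inl hn.symm
      | succ n =>
        refine Or.inr ⟨spow y n, ?_⟩
        have : spow y n * (y * x) = x := by
          rw [← mul_assoc]
          exact hn
        exact this.symm
    · have h' : x = (s * y) * x * t := by
        calc x = s * (y * x) * t := h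
        _ = (s * y) * x * t := by simp only [mul_assoc]
      obtain ⟨n, hn⟩ := my_absorb_left h'
      cases n with
      | zero =>
        refine Or.inr ⟨s, ?_⟩
        have : s * (y * x) = x := by rw [← mul_assoc]; exact hn
        exact this.symm
      | succ n =>
        refine Or.inr ⟨spow (s * y) n * s, ?_⟩
        have : (spow (s * y) n * s) * (y * x) = x := by
          have h2 : (spow (s * y) n * s) * (y * x) = spow (s * y) (n+1) * x := by
            show _ = spow (s * y) n * (s * y) * x
            simp only [mul_assoc]
          rw [h2]; exact hn
        exact this.symm
  show lSet x = lSet (y * x)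
  ext w
  simp only [lSet, Set.mem_insert_iff, Set.mem_setOf_eq]
  constructor
  · rintro (rfl | ⟨s, rfl⟩)
    · rcases hx with h | ⟨t, h⟩
      · exact Or.inl h
      · exact Or.inr ⟨t, h.symm⟩
    · rcases hx with h | ⟨t, h⟩
      · exact Or.inr ⟨s, by rw [← h]⟩
      · exact Or.inr ⟨s * t, by rw [mul_assoc, ← h]⟩
  · rintro (rfl | ⟨s, rfl⟩)
    · exact Or.inr ⟨y, rfl⟩
    · exact Or.inr ⟨s * y, by rw [mul_assoc]⟩

lemma my_sandwich [Fintype S] {z : S} (hz : ∀ x : S, z * x = z ∧ x * z = z)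
    (h0 : ∀ I : Set S, I.Nonempty → (∀ a ∈ I, ∀ s : S, s * a ∈ I ∧ a * s ∈ I) →
      I = {z} ∨ I = Set.univ)
    {g h : S} (hidem : (g * h) * (g * h) = g * h) (hgh : g * h ≠ z) :
    g * h * g = g := by
  have hR := my_greenR_mul hz h0 hgh
  have hg_mem : g ∈ rSet (g * h) := by
    have : g ∈ rSet g := Set.mem_insert _ _
    rwa [hR] at this
  simp only [rSet, Set.mem_insert_iff, Set.mem_setOf_eq] at hg_mem
  rcases hg_mem with heq | ⟨t, ht⟩
  · have h1 : g * h = g := heq.symm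
    calc g * h * g = g * g := by rw [h1]
    _ = (g * h) * (g * h) := by rw [h1]
    _ = g * h := hidem
    _ = g := h1
  · calc (g * h) * g = (g * h) * ((g * h) * t) := by rw [ht]
    _ = ((g * h) * (g * h)) * t := by simp only [mul_assoc]
    _ = (g * h) * t := by rw [hidem]
    _ = g := ht

lemma my_mutual_inv [Fintype S] {z : S} (hz : ∀ x : S, z * x = z ∧ x * z = z)
    (h0 : ∀ I : Set S, I.Nonempty → (∀ a ∈ I, ∀ s : S, s * a ∈ I ∧ a * s ∈ I) →
      I = {z} ∨ I = Set.univ)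
    (horth : ∀ e f : S, e * e = e → f * f = f → (e * f) * (e * f) = e * f)
    {g h : S} (hg : g * g = g) (hh : h * h = h) (hgz : g ≠ z) (hhz : h ≠ z)
    (hgh : g * h ≠ z) : g * h * g = g ∧ h * g * h = h := by
  have h1 : g * h * g = g := my_sandwich hz h0 (horth g h hg hh) hgh
  have hhg : h * g ≠ z := by
    intro e0
    apply hgz
    rw [← h1, mul_assoc, e0]
    exact (hz g).2
  have h2 : h * g * h = h := my_sandwich hz h0 (horth h g hh hg) hhg
  exact ⟨h1, h2⟩

lemma my_inv_idem (horth : ∀ e f : S, e * e = e → f * f = f → (e * f) * (e * f) = e * f)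
    {e b : S} (he : e * e = e) (hb : IsInverseOf b e) : b * b = b := by
  obtain ⟨h1, h2⟩ := hb
  have hbe : (b * e) * (b * e) = b * e := by
    calc (b * e) * (b * e) = (b * e * b) * e := by simp only [mul_assoc]
    _ = b * e := by rw [h2]
  have heb : (e * b) * (e * b) = e * b := by
    calc (e * b) * (e * b) = e * (b * e * b) := by simp only [mul_assoc]
    _ = e * b := by rw [h2]
  have hkey : (b * e) * (e * b) = b := by
    calc (b * e) * (e * b) = b * (e * e) * b := by simp only [mul_assoc]
    _ = b * e * b := by rw [he]
    _ = b := h2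
  have := horth (b * e) (e * b) hbe heb
  rw [hkey] at this
  exact this

lemma my_invs_subset [Fintype S] {z : S} (hz : ∀ x : S, z * x = z ∧ x * z = z)
    (h0 : ∀ I : Set S, I.Nonempty → (∀ a ∈ I, ∀ s : S, s * a ∈ I ∧ a * s ∈ I) →
      I = {z} ∨ I = Set.univ)
    (horth : ∀ e f : S, e * e = e → f * f = f → (e * f) * (e * f) = e * f)
    {g h : S} (hg : g * g = g) (hh : h * h = h) (hgz : g ≠ z) (hhz : h ≠ z)
    (hmut : g * h * g = g ∧ h * g * h = h) : invs g ⊆ invs h := by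
  intro b hb
  obtain ⟨hb1, hb2⟩ := hb
  have hbidem : b * b = b := my_inv_idem horth hg ⟨hb1, hb2⟩
  have hbz : b ≠ z := by
    intro hbe
    apply hgz
    have h' := hb1
    rw [hbe, (hz g).2, (hz g).1] at h'
    exact h'.symm
  have hgbz : g * b ≠ z := by
    intro e0
    apply hgz
    rw [← hb1, e0]
    exact (hz g).1
  have hgbidem := horth g b hg hbidem
  have hhgz : h * g ≠ z := by
    intro e0
    apply hhz
    rw [← hmut.2, e0]
    exact (hz h).1
  have hhgbz : h * (g * b) ≠ z := by
    intro e0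
    apply hhgz
    have key : (h * (g * b)) * g = h * g := by rw [mul_assoc]; rw [show (g * b) * g = g from hb1]
    rw [← key, e0]
    exact (hz g).1
  have hm2 := my_mutual_inv hz h0 horth hh hgbidem hhz hgbz hhgbz
  have hbhz : b * h ≠ z := by
    intro e0
    apply hhz
    rw [← hm2.1]
    calc h * (g * b) * h = h * g * (b * h) := by simp only [mul_assoc]
    _ = h * g * z := by rw [e0]
    _ = z := (hz _).2
  have hm3 := my_mutual_inv hz h0 horth hbidem hh hbz hhz hbhz
  exact ⟨hm3.2, hm3.1⟩

lemma my_invs_eq [Fintype S] {z : S} (hz : ∀ x : S, z * x = z ∧ x * z = z)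
    (h0 : ∀ I : Set S, I.Nonempty → (∀ a ∈ I, ∀ s : S, s * a ∈ I ∧ a * s ∈ I) →
      I = {z} ∨ I = Set.univ)
    (horth : ∀ e f : S, e * e = e → f * f = f → (e * f) * (e * f) = e * f)
    {g h : S} (hg : g * g = g) (hh : h * h = h) (hgz : g ≠ z) (hhz : h ≠ z)
    (hmut : g * h * g = g ∧ h * g * h = h) : invs g = invs h :=
  Set.Subset.antisymm
    (my_invs_subset hz h0 horth hg hh hgz hhz hmut)
    (my_invs_subset hz h0 horth hh hg hhz hgz ⟨hmut.2, hmut.1⟩)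

end MyAux

/-- Lemma 3.3. In a finite orthodox 0-rectangular band, the R-class of
a nonzero element `a` meets `V(e)` for exactly one of the maximal rectangular subbands
`V(e)` (`e` a nonzero idempotent); the same holds for the L-class of `a`. -/
theorem stmt_16 (S : Type*) [Semigroup S] [Fintype S]
    (z : S) (hz : ∀ x : S, z * x = z ∧ x * z = z)
    (hreg : IsRegularSemigroup S)
    (horth : ∀ e f : S, e * e = e → f * f = f → (e * f) * (e * f) = e * f)
    (h0simple : (∃ a b : S, a * b ≠ z) ∧
      ∀ I : Set S, I.Nonempty → (∀ a ∈ I, ∀ s : S, s * a ∈ I ∧ a * s ∈ I) →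
        I = {z} ∨ I = Set.univ)
    (hH : ∀ a b : S, greenH a b → a = b)
    (a : S) (ha : a ≠ z) :
    ((∃ e : S, e ≠ z ∧ e * e = e ∧ (rClass a ∩ invs e).Nonempty) ∧
      ∀ e f : S, e ≠ z → e * e = e → f ≠ z → f * f = f →
        (rClass a ∩ invs e).Nonempty → (rClass a ∩ invs f).Nonempty →
          invs e = invs f) ∧
    ((∃ e : S, e ≠ z ∧ e * e = e ∧ (lClass a ∩ invs e).Nonempty) ∧
      ∀ e f : S, e ≠ z → e * e = e → f ≠ z → f * f = f →
        (lClass a ∩ invs e).Nonempty → (lClass a ∩ invs f).Nonempty →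
          invs e = invs f) := by
  have h0 := h0simple.2
  obtain ⟨b, hb1, hb2⟩ := hreg a
  -- common uniqueness helper
  have huniq : ∀ e f x y : S, e ≠ z → e * e = e → f ≠ z → f * f = f →
      IsInverseOf x e → IsInverseOf y f → (x * y ≠ z ∨ y * x ≠ z) →
      invs e = invs f := by
    intro e f x y hez he hfz hf hxe hyf hne
    have hxidem := my_inv_idem horth he hxe
    have hyidem := my_inv_idem horth hf hyf
    have hxz : x ≠ z := by
      intro hxe0
      apply hez
      have h' := hxe.1
      rw [hxe0, (hz e).2, (hz e).1] at h'
      exact h'.symm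
    have hyz : y ≠ z := by
      intro hyf0
      apply hfz
      have h' := hyf.1
      rw [hyf0, (hz f).2, (hz f).1] at h'
      exact h'.symm
    have hmut : x * y * x = x ∧ y * x * y = y := by
      rcases hne with h | h
      · exact my_mutual_inv hz h0 horth hxidem hyidem hxz hyz h
      · have := my_mutual_inv hz h0 horth hyidem hxidem hyz hxz h
        exact ⟨this.2, this.1⟩
    have h1 : invs e = invs x :=
      my_invs_eq hz h0 horth he hxidem hez hxz ⟨hxe.1, hxe.2⟩
    have h2 : invs x = invs y :=
      my_invs_eq hz h0 horth hxidem hyidem hxz hyz hmut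
    have h3 : invs f = invs y :=
      my_invs_eq hz h0 horth hf hyidem hfz hyz ⟨hyf.1, hyf.2⟩
    rw [h1, h2, h3]
  constructor
  · constructor
    · -- existence for R
      have habz : a * b ≠ z := by
        intro e0
        apply ha
        rw [← hb1, e0]
        exact (hz a).1
      have habidem : (a * b) * (a * b) = a * b := by
        calc (a * b) * (a * b) = (a * b * a) * b := by simp only [mul_assoc]
        _ = a * b := by rw [hb1]
      refine ⟨a * b, habz, habidem, ⟨a * b, ?_, ?_⟩⟩
      · exact my_greenR_mul hz h0 habz
      · exact ⟨by rw [habidem, habidem], by rw [habidem, habidem]⟩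
    · rintro e f hez he hfz hf ⟨x, hxR, hxe⟩ ⟨y, hyR, hyf⟩
      have hxR' : rSet a = rSet x := hxR
      have hyR' : rSet a = rSet y := hyR
      have hxidem := my_inv_idem horth he hxe
      have hyz : y ≠ z := by
        intro hyf0
        apply hfz
        have h' := hyf.1
        rw [hyf0, (hz f).2, (hz f).1] at h'
        exact h'.symm
      have hxz : x ≠ z := by
        intro hxe0
        apply hez
        have h' := hxe.1
        rw [hxe0, (hz e).2, (hz e).1] at h'
        exact h'.symm
      have hy_mem : y ∈ rSet x := by
        rw [← hxR', hyR']
        exact Set.mem_insert _ _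
      simp only [rSet, Set.mem_insert_iff, Set.mem_setOf_eq] at hy_mem
      have hxyz : x * y ≠ z := by
        rcases hy_mem with rfl | ⟨s, hs⟩
        · rw [hxidem]; exact hxz
        · rw [← hs, ← mul_assoc, hxidem, hs]; exact hyz
      exact huniq e f x y hez he hfz hf hxe hyf (Or.inl hxyz)
  · constructor
    · -- existence for L
      have hbaz : b * a ≠ z := by
        intro e0
        apply ha
        rw [← hb1, mul_assoc, e0]
        exact (hz a).2
      have hbaidem : (b * a) * (b * a) = b * a := by
        calc (b * a) * (b * a) = b * (a * b * a) := by simp only [mul_assoc]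
        _ = b * a := by rw [hb1]
      refine ⟨b * a, hbaz, hbaidem, ⟨b * a, ?_, ?_⟩⟩
      · exact my_greenL_mul hz h0 hbaz
      · exact ⟨by rw [hbaidem, hbaidem], by rw [hbaidem, hbaidem]⟩
    · rintro e f hez he hfz hf ⟨x, hxL, hxe⟩ ⟨y, hyL, hyf⟩
      have hxL' : lSet a = lSet x := hxL
      have hyL' : lSet a = lSet y := hyL
      have hxidem := my_inv_idem horth he hxe
      have hyz : y ≠ z := by
        intro hyf0
        apply hfz
        have h' := hyf.1
        rw [hyf0, (hz f).2, (hz f).1] at h'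
        exact h'.symm
      have hxz : x ≠ z := by
        intro hxe0
        apply hez
        have h' := hxe.1
        rw [hxe0, (hz e).2, (hz e).1] at h'
        exact h'.symm
      have hy_mem : y ∈ lSet x := by
        rw [← hxL', hyL']
        exact Set.mem_insert _ _
      simp only [lSet, Set.mem_insert_iff, Set.mem_setOf_eq] at hy_mem
      have hyxz : y * x ≠ z := by
        rcases hy_mem with rfl | ⟨s, hs⟩
        · rw [hxidem]; exact hxz
        · rw [← hs, mul_assoc, hxidem, hs]; exact hyz
      exact huniq e f x y hez he hfz hf hxe hyf (Or.inr hyxz)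
end

section
/- Let S be a finite orthodox 0-rectangular band, let a ∈ S be nonzero, and let e, f ∈ S be idempotents with e R a and f L a. Then |V(a)| = m * n, where m is the number of distinct R-classes of elements of V(f) and n is the number of distinct L-classes of elements of V(e). -/
variable {S : Type*}

section aux
variable [Semigroup S]

lemma aux_mem_rSet_self (x : S) : x ∈ rSet x := Set.mem_insert _ _
lemma aux_mem_lSet_self (x : S) : x ∈ lSet x := Set.mem_insert _ _

lemma aux_idem_left {g h : S} (hg : g * g = g) (hm : h ∈ rSet g) : g * h = h := by
  simp only [rSet, Set.mem_insert_iff, Set.mem_setOf_eq] at hm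
  rcases hm with rfl | ⟨s, rfl⟩
  · exact hg
  · rw [← mul_assoc, hg]

lemma aux_idem_right {g h : S} (hg : g * g = g) (hm : h ∈ lSet g) : h * g = h := by
  simp only [lSet, Set.mem_insert_iff, Set.mem_setOf_eq] at hm
  rcases hm with rfl | ⟨s, rfl⟩
  · exact hg
  · rw [mul_assoc, hg]

lemma aux_greenR_of_mul {x y : S} (h1 : ∃ s, x * s = y) (h2 : ∃ t, y * t = x) :
    greenR x y := by
  obtain ⟨s, hs⟩ := h1
  obtain ⟨t, ht⟩ := h2
  apply Set.Subset.antisymm <;> intro w hw <;>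
    simp only [rSet, Set.mem_insert_iff, Set.mem_setOf_eq] at hw ⊢
  · rcases hw with rfl | ⟨u, rfl⟩
    · exact Or.inr ⟨t, ht⟩
    · exact Or.inr ⟨t * u, by rw [← mul_assoc, ht]⟩
  · rcases hw with rfl | ⟨u, rfl⟩
    · exact Or.inr ⟨s, hs⟩
    · exact Or.inr ⟨s * u, by rw [← mul_assoc, hs]⟩

lemma aux_greenL_of_mul {x y : S} (h1 : ∃ s, s * x = y) (h2 : ∃ t, t * y = x) :
    greenL x y := by
  obtain ⟨s, hs⟩ := h1
  obtain ⟨t, ht⟩ := h2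
  apply Set.Subset.antisymm <;> intro w hw <;>
    simp only [lSet, Set.mem_insert_iff, Set.mem_setOf_eq] at hw ⊢
  · rcases hw with rfl | ⟨u, rfl⟩
    · exact Or.inr ⟨t, ht⟩
    · exact Or.inr ⟨u * t, by rw [mul_assoc, ht]⟩
  · rcases hw with rfl | ⟨u, rfl⟩
    · exact Or.inr ⟨s, hs⟩
    · exact Or.inr ⟨u * s, by rw [mul_assoc, hs]⟩

lemma aux_rClass_eq_of {x y : S} (h : greenR x y) : rClass x = rClass y := by
  unfold rClass greenR at *
  rw [h]

lemma aux_lClass_eq_of {x y : S} (h : greenL x y) : lClass x = lClass y := by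
  unfold lClass greenL at *
  rw [h]

end aux

/-- Lemma 3.4(iii). In a finite orthodox 0-rectangular band, with `a`
nonzero, `e, f` idempotents, `e R a`, `f L a`: `|V(a)| = m * n` where `m` is the number
of distinct R-classes of elements of `V(f)` and `n` the number of distinct L-classes of
elements of `V(e)`. -/
theorem stmt_18 (S : Type*) [Semigroup S] [Fintype S]
    (z : S) (hz : ∀ x : S, z * x = z ∧ x * z = z)
    (hreg : IsRegularSemigroup S)
    (horth : ∀ e f : S, e * e = e → f * f = f → (e * f) * (e * f) = e * f)
    (h0simple : (∃ a b : S, a * b ≠ z) ∧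
      ∀ I : Set S, I.Nonempty → (∀ a ∈ I, ∀ s : S, s * a ∈ I ∧ a * s ∈ I) →
        I = {z} ∨ I = Set.univ)
    (hH : ∀ a b : S, greenH a b → a = b)
    (a : S) (ha : a ≠ z)
    (e f : S) (hee : e * e = e) (hff : f * f = f)
    (hea : greenR e a) (hfa : greenL f a) :
    (invs a).ncard = (rClass '' invs f).ncard * (lClass '' invs e).ncard := by
  classical
  have hfa' : lSet f = lSet a := hfa
  have hea' : rSet e = rSet a := hea
  have haf : a * f = a :=
    aux_idem_right hff (by rw [hfa']; exact aux_mem_lSet_self a)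
  have hea2 : e * a = a :=
    aux_idem_left hee (by rw [hea']; exact aux_mem_rSet_self a)
  -- well-definedness: b ∈ V(a) gives b*a ∈ V(f) with b R b*a
  have key1 : ∀ b ∈ invs a, b * a ∈ invs f ∧ greenR b (b * a) := by
    intro b hb
    obtain ⟨h1, h2⟩ := hb
    have hba_idem : (b * a) * (b * a) = b * a := by
      rw [show (b * a) * (b * a) = (b * a * b) * a from by simp [mul_assoc], h2]
    have hLa : greenL a (b * a) :=
      aux_greenL_of_mul ⟨b, rfl⟩ ⟨a, by rw [← mul_assoc]; exact h1⟩
    have hf_mem : f ∈ lSet (b * a) := by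
      rw [← hLa, ← hfa']; exact aux_mem_lSet_self f
    have hba_mem : b * a ∈ lSet f := by
      rw [hfa']
      exact Set.mem_insert_iff.mpr (Or.inr ⟨b, rfl⟩)
    have e1 : f * (b * a) = f := aux_idem_right hba_idem hf_mem
    have e2 : (b * a) * f = b * a := aux_idem_right hff hba_mem
    refine ⟨⟨?_, ?_⟩, aux_greenR_of_mul ⟨a, rfl⟩ ⟨b, h2⟩⟩
    · rw [show f * (b * a) * f = (f * (b * a)) * f from rfl, e1, hff]
    · rw [show (b * a) * f * (b * a) = ((b * a) * f) * (b * a) from rfl, e2, hba_idem]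
  -- well-definedness: b ∈ V(a) gives a*b ∈ V(e) with b L a*b
  have key2 : ∀ b ∈ invs a, a * b ∈ invs e ∧ greenL b (a * b) := by
    intro b hb
    obtain ⟨h1, h2⟩ := hb
    have hab_idem : (a * b) * (a * b) = a * b := by
      rw [show (a * b) * (a * b) = (a * b * a) * b from by simp [mul_assoc], h1]
    have hRa : greenR a (a * b) :=
      aux_greenR_of_mul ⟨b, rfl⟩ ⟨a, h1⟩
    have he_mem : e ∈ rSet (a * b) := by
      rw [← hRa, ← hea']; exact aux_mem_rSet_self e
    have hab_mem : a * b ∈ rSet e := by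
      rw [hea']
      exact Set.mem_insert_iff.mpr (Or.inr ⟨b, rfl⟩)
    have e1 : (a * b) * e = e := aux_idem_left hab_idem he_mem
    have e2 : e * (a * b) = a * b := aux_idem_left hee hab_mem
    refine ⟨⟨?_, ?_⟩, aux_greenL_of_mul ⟨a, rfl⟩ ⟨b, by rw [← mul_assoc]; exact h2⟩⟩
    · rw [show e * (a * b) * e = (e * (a * b)) * e from rfl, e2, e1]
    · rw [show (a * b) * e * (a * b) = ((a * b) * e) * (a * b) from rfl, e1, e2]
  -- surjectivity: from c ∈ V(f), d ∈ V(e) construct b ∈ V(a) with b R c, b L d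
  have key3 : ∀ c ∈ invs f, ∀ d ∈ invs e, ∃ b ∈ invs a, greenR b c ∧ greenL b d := by
    intro c hc d hd
    obtain ⟨a₁, ha11, ha12⟩ := hreg a
    obtain ⟨hc1, hc2⟩ := hc
    obtain ⟨hd1, hd2⟩ := hd
    have I1 : a * c * f = a := by
      have h : a * c * f = (a * f) * c * f := by rw [haf]
      rw [h, show (a * f) * c * f = a * (f * c * f) from by simp [mul_assoc], hc1, haf]
    have I2 : e * d * a = a := by
      have h : e * d * a = e * d * (e * a) := by rw [hea2]
      rw [h, show e * d * (e * a) = (e * d * e) * a from by simp [mul_assoc], hd1, hea2]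
    have haa₁_idem : (a * a₁) * (a * a₁) = a * a₁ := by
      rw [show (a * a₁) * (a * a₁) = (a * a₁ * a) * a₁ from by simp [mul_assoc], ha11]
    have hRaa₁ : greenR a (a * a₁) := aux_greenR_of_mul ⟨a₁, rfl⟩ ⟨a, ha11⟩
    have haae : (a * a₁) * e = e :=
      aux_idem_left haa₁_idem (by rw [← hRaa₁, ← hea']; exact aux_mem_rSet_self e)
    have ha₁a_idem : (a₁ * a) * (a₁ * a) = a₁ * a := by
      rw [show (a₁ * a) * (a₁ * a) = a₁ * (a * a₁ * a) from by simp [mul_assoc], ha11]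
    have hLa₁a : greenL a (a₁ * a) :=
      aux_greenL_of_mul ⟨a₁, rfl⟩ ⟨a, by rw [← mul_assoc]; exact ha11⟩
    have hfa₁a : f * (a₁ * a) = f :=
      aux_idem_right ha₁a_idem (by rw [← hLa₁a, ← hfa']; exact aux_mem_lSet_self f)
    -- generalized (prefixed) identities
    have G1 : ∀ x : S, x * a * c * f = x * a := fun x => by
      rw [show x * a * c * f = x * (a * c * f) from by simp [mul_assoc], I1]
    have G2 : ∀ x : S, x * e * d * a = x * a := fun x => by
      rw [show x * e * d * a = x * (e * d * a) from by simp [mul_assoc], I2]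
    have G3 : ∀ x : S, x * a * a₁ * e = x * e := fun x => by
      rw [show x * a * a₁ * e = x * ((a * a₁) * e) from by simp [mul_assoc], haae]
    have G4 : ∀ x : S, x * a₁ * a * a₁ = x * a₁ := fun x => by
      rw [show x * a₁ * a * a₁ = x * (a₁ * a * a₁) from by simp [mul_assoc], ha12]
    have G5 : ∀ x : S, x * f * a₁ * a = x * f := fun x => by
      rw [show x * f * a₁ * a = x * (f * (a₁ * a)) from by simp [mul_assoc], hfa₁a]
    refine ⟨c * f * a₁ * e * d, ⟨?_, ?_⟩, ?_, ?_⟩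
    · -- a * b * a = a
      calc a * (c * f * a₁ * e * d) * a = a * c * f * a₁ * e * d * a := by
            simp [mul_assoc]
        _ = a * a₁ * e * d * a := by rw [I1]
        _ = e * d * a := by rw [haae]
        _ = a := I2
    · -- b * a * b = b
      calc (c * f * a₁ * e * d) * a * (c * f * a₁ * e * d)
            = c * f * a₁ * e * d * a * c * f * a₁ * e * d := by simp [mul_assoc]
        _ = c * f * a₁ * a * c * f * a₁ * e * d := by rw [G2]
        _ = c * f * a₁ * a * a₁ * e * d := by rw [G1]
        _ = c * f * a₁ * e * d := by rw [G4]
    · -- b R c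
      refine aux_greenR_of_mul ⟨a * c, ?_⟩ ⟨f * a₁ * e * d, by simp [mul_assoc]⟩
      calc (c * f * a₁ * e * d) * (a * c) = c * f * a₁ * e * d * a * c := by
            simp [mul_assoc]
        _ = c * f * a₁ * a * c := by rw [G2]
        _ = c * f * c := by rw [G5]
        _ = c := hc2
    · -- b L d
      refine aux_greenL_of_mul ⟨d * a, ?_⟩ ⟨c * f * a₁ * e, rfl⟩
      calc (d * a) * (c * f * a₁ * e * d) = d * a * c * f * a₁ * e * d := by
            simp [mul_assoc]
        _ = d * a * a₁ * e * d := by rw [G1]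
        _ = d * e * d := by rw [G3]
        _ = d := hd2
  -- the bijection
  have hmapR : ∀ b : S, b ∈ invs a → rClass b ∈ rClass '' invs f := fun b hb =>
    ⟨b * a, (key1 b hb).1, (aux_rClass_eq_of (key1 b hb).2).symm⟩
  have hmapL : ∀ b : S, b ∈ invs a → lClass b ∈ lClass '' invs e := fun b hb =>
    ⟨a * b, (key2 b hb).1, (aux_lClass_eq_of (key2 b hb).2).symm⟩
  let F : ↥(invs a) → ↥(rClass '' invs f) × ↥(lClass '' invs e) := fun b =>
    (⟨rClass b.1, hmapR b.1 b.2⟩, ⟨lClass b.1, hmapL b.1 b.2⟩)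
  have Finj : Function.Injective F := by
    rintro ⟨b, hb⟩ ⟨b', hb'⟩ h
    have hR : rClass b = rClass b' := congrArg (fun p => (p.1 : Set S)) h
    have hL : lClass b = lClass b' := congrArg (fun p => (p.2 : Set S)) h
    have hRb : greenR b b' := by
      have : b' ∈ rClass b := by rw [hR]; exact (rfl : rSet b' = rSet b')
      exact this
    have hLb : greenL b b' := by
      have : b' ∈ lClass b := by rw [hL]; exact (rfl : lSet b' = lSet b')
      exact this
    exact Subtype.ext (hH b b' ⟨hLb, hRb⟩)
  have Fsurj : Function.Surjective F := by
    rintro ⟨⟨X, c, hcf, hcX⟩, ⟨Y, d, hde, hdY⟩⟩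
    obtain ⟨b, hbinv, hbc, hbd⟩ := key3 c hcf d hde
    refine ⟨⟨b, hbinv⟩, ?_⟩
    refine Prod.ext (Subtype.ext ?_) (Subtype.ext ?_)
    · exact (aux_rClass_eq_of hbc).trans hcX
    · exact (aux_lClass_eq_of hbd).trans hdY
  rw [← Nat.card_coe_set_eq, ← Nat.card_coe_set_eq, ← Nat.card_coe_set_eq,
    Nat.card_congr (Equiv.ofBijective F ⟨Finj, Fsurj⟩), Nat.card_prod]
end
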